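/- arXiv:2106.13983 — 8 statements merged into one kernel-verified Lean document; each statement's English description precedes it below -/
import Mathlib

section
/- For every positive integer n, the sum over a from 1 to n with gcd(a,n)=1 of gcd(a-1,n) equals φ(n)·σ₀(n), where σ₀(n) is the number of divisors of n. -/
/-!
Write `gcd (a - 1) n = ∑ φ d` over the divisors `d ∣ n` with `a ≡ 1 [MOD d]` and swap the two
sums. For a fixed `d ∣ n`, the units `a` of `ZMod n` with `a ≡ 1 [MOD d]` form the kernel of the
surjection `(ZMod n)ˣ → (ZMod d)ˣ`, so there are `φ n / φ d` of them, and each divisor contributes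
exactly `φ n`.
-/

open Finset Nat

theorem Nat.sum_totient_divisors_dvd_eq_gcd {n : ℕ} (m : ℕ) (hn : n ≠ 0) :
    ∑ d ∈ n.divisors with d ∣ m, φ d = m.gcd n := by
  rw [← Nat.sum_totient (m.gcd n)]
  congr 1
  ext d
  simp [Nat.dvd_gcd_iff, hn, and_comm]

namespace ZMod

theorem totient_mul_card_ker_unitsMap {n d : ℕ} [NeZero n] (hd : d ∣ n) :
    φ d * Nat.card (unitsMap hd).ker = φ n := by
  have : NeZero d := ⟨fun h => NeZero.ne n (Nat.eq_zero_of_zero_dvd (h ▸ hd))⟩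
  rw [← card_units_eq_totient, ← card_units_eq_totient, ← Nat.card_eq_fintype_card,
    ← Nat.card_eq_fintype_card, ← (unitsMap hd).ker.index_mul_card, Subgroup.index_ker,
    MonoidHom.range_eq_top_of_surjective _ (unitsMap_surjective hd), Subgroup.card_top]

theorem natCast_eq_one_iff_dvd_sub_one {a : ℕ} (d : ℕ) (ha : 1 ≤ a) :
    (a : ZMod d) = 1 ↔ d ∣ a - 1 := by
  rw [← natCast_eq_zero_iff, Nat.cast_sub ha, Nat.cast_one, sub_eq_zero]

theorem val_natCast_sub_one_add_one {n a : ℕ} (ha : a ∈ Icc 1 n) :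
    ((a : ZMod n) - 1).val + 1 = a := by
  rw [mem_Icc] at ha
  rw [← Nat.cast_one, ← Nat.cast_sub ha.1, val_natCast_of_lt (by omega)]
  omega

theorem unitsMap_unitOfCoprime {n d a : ℕ} (hd : d ∣ n) (ha : a.Coprime n) :
    (unitsMap hd (unitOfCoprime a ha) : ZMod d) = a := by
  rw [unitsMap_val, coe_unitOfCoprime, cast_natCast hd]

theorem card_filter_Icc_dvd_sub_one_eq_card_ker_unitsMap {n d : ℕ} [NeZero n] (hd : d ∣ n) :
    #{a ∈ Icc 1 n | a.gcd n = 1 ∧ d ∣ a - 1} = Nat.card (unitsMap hd).ker := by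
  rw [Nat.card_eq_fintype_card, Fintype.card_subtype]
  refine card_bij' (fun a ha => unitOfCoprime a (mem_filter.1 ha).2.1)
    (fun u _ => ((u : ZMod n) - 1).val + 1) ?_ ?_ ?_ ?_
  · intro a ha
    obtain ⟨ha, -, hdvd⟩ := by simpa only [mem_filter] using ha
    simp only [mem_filter, mem_univ, true_and, MonoidHom.mem_ker, Units.ext_iff,
      unitsMap_unitOfCoprime, Units.val_one]
    exact (natCast_eq_one_iff_dvd_sub_one d (mem_Icc.1 ha).1).2 hdvd
  · intro u hu
    have hcast : ((((u : ZMod n) - 1).val + 1 : ℕ) : ZMod n) = u := by simp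
    simp only [mem_filter, mem_univ, true_and, MonoidHom.mem_ker, Units.ext_iff] at hu
    refine mem_filter.2 ⟨mem_Icc.2 ⟨by omega, val_lt _⟩, ?_, ?_⟩
    · exact (isUnit_iff_coprime _ n).1 (by rw [hcast]; exact u.isUnit)
    · rw [← natCast_eq_one_iff_dvd_sub_one d (by omega), ← cast_natCast hd, hcast]
      exact hu
  · intro a ha
    exact val_natCast_sub_one_add_one (mem_filter.1 ha).1
  · intro u _
    ext
    simp

end ZMod

/-- **Menon's identity**: for every positive integer `n`,
`∑_{a=1, gcd(a,n)=1}^{n} gcd(a-1, n) = φ(n) · σ₀(n)`. -/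
theorem menon_identity (n : ℕ) (hn : 0 < n) :
    ∑ a ∈ (Finset.Icc 1 n).filter (fun a => Nat.gcd a n = 1), Nat.gcd (a - 1) n =
      Nat.totient n * n.divisors.card := by
  have : NeZero n := ⟨hn.ne'⟩
  calc ∑ a ∈ (Icc 1 n).filter (fun a => a.gcd n = 1), (a - 1).gcd n
      = ∑ a ∈ (Icc 1 n).filter (fun a => a.gcd n = 1), ∑ d ∈ n.divisors with d ∣ a - 1, φ d :=
        sum_congr rfl fun a _ => (sum_totient_divisors_dvd_eq_gcd (a - 1) hn.ne').symm
    _ = ∑ d ∈ n.divisors, ∑ a ∈ Icc 1 n with a.gcd n = 1 ∧ d ∣ a - 1, φ d :=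
        sum_comm' fun a d => by simp only [mem_filter]; tauto
    _ = ∑ _d ∈ n.divisors, φ n := by
        refine sum_congr rfl fun d hd => ?_
        rw [sum_const, smul_eq_mul, mul_comm, ZMod.card_filter_Icc_dvd_sub_one_eq_card_ker_unitsMap
          (Nat.dvd_of_mem_divisors hd), ZMod.totient_mul_card_ker_unitsMap]
    _ = φ n * n.divisors.card := by rw [sum_const, smul_eq_mul, mul_comm]
end

section
/- For all integers n ≥ 1 and s ≥ 0, ∑_{1 ≤ a, b₁, …, b_s ≤ n, gcd(a,n)=1} gcd(a−1, b₁, …, b_s, n) = φ(n)·σ_s(n), where σ_s(n) = ∑_{d|n} d^s. -/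
open Finset

lemma icc_mod_inj {n a a' : ℕ} (ha : a ∈ Finset.Icc 1 n) (ha' : a' ∈ Finset.Icc 1 n)
    (h : a ≡ a' [MOD n]) : a = a' := by
  simp only [Finset.mem_Icc] at ha ha'
  have hd : (n : ℤ) ∣ (a' : ℤ) - a := h.dvd
  have habs : |(a' : ℤ) - a| < n := by rw [abs_lt]; omega
  have := Int.eq_zero_of_abs_lt_dvd hd habs
  omega

lemma key_count (n d : ℕ) (hn : n ≠ 0) (hd : d ∣ n) (hd0 : d ≠ 0) :
    ((Finset.Icc 1 n).filter (fun a => Nat.gcd a n = 1 ∧ d ∣ (a - 1))).card * d.totient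
      = n.totient := by
  haveI : NeZero n := ⟨hn⟩
  haveI : NeZero d := ⟨hd0⟩
  set f := ZMod.unitsMap hd with hf
  have hfcoe : ∀ u : (ZMod n)ˣ, (f u : ZMod d) = ZMod.castHom hd (ZMod d) (u : ZMod n) := by
    intro u; rw [hf, ZMod.unitsMap_def]; rfl
  have hcard : ((Finset.Icc 1 n).filter (fun a => Nat.gcd a n = 1 ∧ d ∣ (a - 1))).card
      = (Finset.univ.filter (fun u : (ZMod n)ˣ => f u = 1)).card := by
    apply Finset.card_bij (fun a ha => ZMod.unitOfCoprime a
      (by simp only [Finset.mem_filter] at ha; exact ha.2.1))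
    · intro a ha
      simp only [Finset.mem_filter, Finset.mem_Icc] at ha
      simp only [Finset.mem_filter, Finset.mem_univ, true_and]
      obtain ⟨⟨h1, h2⟩, hcop, hdvd⟩ := ha
      have hmod : (a : ZMod d) = 1 := by
        have h3 : a ≡ 1 [MOD d] := ((Nat.modEq_iff_dvd' h1).2 hdvd).symm
        calc (a : ZMod d) = ((1 : ℕ) : ZMod d) := (ZMod.natCast_eq_natCast_iff _ _ _).2 h3
        _ = 1 := Nat.cast_one
      apply Units.ext
      rw [hfcoe]
      simp only [ZMod.coe_unitOfCoprime]
      rw [ZMod.castHom_apply, ZMod.cast_natCast hd, hmod]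
      rfl
    · intro a ha a' ha' heq
      have hc : (a : ZMod n) = a' := by
        have := congrArg (fun u : (ZMod n)ˣ => (u : ZMod n)) heq
        simpa [ZMod.coe_unitOfCoprime] using this
      exact icc_mod_inj (Finset.mem_filter.1 ha).1 (Finset.mem_filter.1 ha').1
        ((ZMod.natCast_eq_natCast_iff _ _ _).1 hc)
    · intro u hu
      simp only [Finset.mem_filter, Finset.mem_univ, true_and] at hu
      set v := (u : ZMod n).val with hv
      have hvlt : v < n := ZMod.val_lt _
      set a := if v = 0 then n else v with hav
      have hcast : ((a : ℕ) : ZMod n) = (u : ZMod n) := by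
        rw [hav]
        split_ifs with h0
        · rw [ZMod.natCast_self, ((ZMod.val_eq_zero _).1 h0).symm]
        · exact ZMod.natCast_rightInverse (u : ZMod n)
      have ha1 : 1 ≤ a := by rw [hav]; split_ifs <;> omega
      have hcop : Nat.gcd a n = 1 := by
        have : IsUnit ((a : ℕ) : ZMod n) := hcast ▸ u.isUnit
        exact (ZMod.isUnit_iff_coprime a n).1 this
      have hdvd : d ∣ a - 1 := by
        have h4 : (a : ZMod d) = 1 := by
          rw [← ZMod.cast_natCast hd, hcast, ← ZMod.castHom_apply (h := hd), ← hfcoe, hu]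
          rfl
        have h5 : a ≡ 1 [MOD d] := by
          rw [← Nat.cast_one (R := ZMod d)] at h4
          exact (ZMod.natCast_eq_natCast_iff _ _ _).1 h4
        exact (Nat.modEq_iff_dvd' ha1).1 h5.symm
      refine ⟨a, ?_, ?_⟩
      · simp only [Finset.mem_filter, Finset.mem_Icc]
        refine ⟨⟨ha1, ?_⟩, hcop, hdvd⟩
        rw [hav]; split_ifs <;> omega
      · exact Units.ext (by simpa [ZMod.coe_unitOfCoprime] using hcast)
  rw [hcard]
  have hker : (Finset.univ.filter (fun u : (ZMod n)ˣ => f u = 1)).card = Nat.card f.ker := by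
    rw [Nat.card_congr (Equiv.subtypeEquivRight (fun u => Iff.symm MonoidHom.mem_ker) :
      {u : (ZMod n)ˣ // u ∈ f.ker} ≃ {u : (ZMod n)ˣ // f u = 1})]
    rw [Nat.card_eq_fintype_card, Fintype.card_subtype]
  have hquot : Nat.card ((ZMod n)ˣ ⧸ f.ker) = d.totient := by
    rw [Nat.card_congr (QuotientGroup.quotientKerEquivOfSurjective f
      (ZMod.unitsMap_surjective hd)).toEquiv]
    rw [Nat.card_eq_fintype_card, ZMod.card_units_eq_totient]
  have htot : Nat.card (ZMod n)ˣ = n.totient := by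
    rw [Nat.card_eq_fintype_card, ZMod.card_units_eq_totient]
  have := Subgroup.card_eq_card_quotient_mul_card_subgroup f.ker
  rw [htot, hquot] at this
  rw [hker, this]; exact Nat.mul_comm _ _

lemma gcd_eq_sum_totient (n x : ℕ) (hn : n ≠ 0) :
    Nat.gcd x n = ∑ d ∈ n.divisors.filter (· ∣ x), d.totient := by
  conv_lhs => rw [← Nat.sum_totient (Nat.gcd x n)]
  apply Finset.sum_congr _ (fun _ _ => rfl)
  ext d
  simp only [Nat.mem_divisors, Finset.mem_filter, Nat.dvd_gcd_iff]
  constructor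
  · rintro ⟨⟨h1, h2⟩, _⟩; exact ⟨⟨h2, hn⟩, h1⟩
  · rintro ⟨⟨h1, _⟩, h2⟩
    exact ⟨⟨h2, h1⟩, Nat.gcd_ne_zero_right hn⟩

set_option maxHeartbeats 1000000 in
/-- **Sury's identity**: for all `n ≥ 1` and `s ≥ 0`,
`∑_{1 ≤ a,b₁,…,b_s ≤ n, gcd(a,n)=1} gcd(a-1, b₁, …, b_s, n) = φ(n)·σ_s(n)`. -/
theorem sury_identity (n : ℕ) (hn : 1 ≤ n) (s : ℕ) :
    ∑ a ∈ (Finset.Icc 1 n).filter (fun a => Nat.gcd a n = 1),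
      ∑ b ∈ Fintype.piFinset (fun _ : Fin s => Finset.Icc 1 n),
        Nat.gcd (Nat.gcd (a - 1) (Finset.univ.gcd b)) n =
      Nat.totient n * ∑ d ∈ n.divisors, d ^ s := by
  have hn0 : n ≠ 0 := by omega
  set A := (Finset.Icc 1 n).filter (fun a => Nat.gcd a n = 1) with hA
  set B := Fintype.piFinset (fun _ : Fin s => Finset.Icc 1 n) with hB
  have step1 : ∀ a, ∀ b : Fin s → ℕ,
      Nat.gcd (Nat.gcd (a - 1) (Finset.univ.gcd b)) n
        = ∑ d ∈ n.divisors, if d ∣ (a - 1) ∧ ∀ i, d ∣ b i then d.totient else 0 := by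
    intro a b
    rw [gcd_eq_sum_totient n _ hn0, Finset.sum_filter]
    apply Finset.sum_congr rfl
    intro d _
    congr 1
    simp [Nat.dvd_gcd_iff, Finset.dvd_gcd_iff]
  calc ∑ a ∈ A, ∑ b ∈ B, Nat.gcd (Nat.gcd (a - 1) (Finset.univ.gcd b)) n
      = ∑ a ∈ A, ∑ d ∈ n.divisors, ∑ b ∈ B,
          if d ∣ (a - 1) ∧ ∀ i, d ∣ b i then d.totient else 0 := by
        refine Finset.sum_congr rfl (fun a _ => ?_)
        simp only [step1]
        exact Finset.sum_comm
    _ = ∑ d ∈ n.divisors, ∑ a ∈ A, ∑ b ∈ B,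
          if d ∣ (a - 1) ∧ ∀ i, d ∣ b i then d.totient else 0 := Finset.sum_comm
    _ = ∑ d ∈ n.divisors, n.totient * (n / d) ^ s := by
        refine Finset.sum_congr rfl (fun d hd => ?_)
        obtain ⟨hdvd, -⟩ := Nat.mem_divisors.1 hd
        have hd0 : d ≠ 0 := (Nat.pos_of_mem_divisors hd).ne'
        -- split the indicator
        have split : ∀ (a : ℕ) (b : Fin s → ℕ),
            (if d ∣ (a - 1) ∧ ∀ i, d ∣ b i then d.totient else 0)
              = (if d ∣ (a - 1) then 1 else 0) * (if ∀ i, d ∣ b i then d.totient else 0) := by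
          intro a b
          by_cases h1 : d ∣ (a - 1) <;> by_cases h2 : ∀ i, d ∣ b i <;> simp [h1, h2]
        simp only [split]
        rw [← Finset.sum_mul_sum]
        -- first factor: card count
        have f1 : (∑ a ∈ A, if d ∣ (a - 1) then (1:ℕ) else 0)
            = ((Finset.Icc 1 n).filter (fun a => Nat.gcd a n = 1 ∧ d ∣ (a - 1))).card := by
          have he : (Finset.Icc 1 n).filter (fun a => Nat.gcd a n = 1 ∧ d ∣ (a - 1))
              = A.filter (fun a => d ∣ (a - 1)) := by
            rw [hA, Finset.filter_filter]
          rw [he, Finset.card_filter]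
        -- second factor
        have fdiv : (∑ x ∈ Finset.Icc 1 n, if d ∣ x then (1:ℕ) else 0) = n / d := by
          rw [← Finset.card_filter]
          rw [show Finset.Icc 1 n = Finset.Ioc 0 n from by
            ext x; simp [Nat.lt_iff_add_one_le]]
          exact Nat.Ioc_filter_dvd_card_eq_div n d
        have f2 : (∑ b ∈ B, if ∀ i, d ∣ b i then d.totient else 0)
            = d.totient * (n / d) ^ s := by
          have split2 : ∀ b : Fin s → ℕ,
              (if ∀ i, d ∣ b i then d.totient else 0)
                = d.totient * ∏ i : Fin s, if d ∣ b i then 1 else 0 := by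
            intro b
            by_cases h : ∀ i, d ∣ b i
            · simp [h]
            · push_neg at h
              obtain ⟨i, hi⟩ := h
              have hz : (∏ i : Fin s, if d ∣ b i then (1:ℕ) else 0) = 0 :=
                Finset.prod_eq_zero (Finset.mem_univ i) (if_neg hi)
              rw [if_neg (by push_neg; exact ⟨i, hi⟩), hz, Nat.mul_zero]
          simp only [split2]
          rw [← Finset.mul_sum, hB]
          rw [show (∑ b ∈ Fintype.piFinset (fun _ : Fin s => Finset.Icc 1 n),
              ∏ i : Fin s, if d ∣ b i then (1:ℕ) else 0)
            = ∏ _i : Fin s, ∑ x ∈ Finset.Icc 1 n, if d ∣ x then (1:ℕ) else 0 from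
              (Finset.prod_univ_sum (fun _ => Finset.Icc 1 n)
                (fun _ x => if d ∣ x then 1 else 0)).symm]
          simp only [fdiv]
          rw [Finset.prod_const, Finset.card_univ, Fintype.card_fin]
        rw [f1, f2, ← Nat.mul_assoc, key_count n d hn0 hdvd hd0]
    _ = n.totient * ∑ d ∈ n.divisors, (n / d) ^ s := by rw [Finset.mul_sum]
    _ = n.totient * ∑ d ∈ n.divisors, d ^ s := by exact congrArg _ (Nat.sum_div_divisors n (· ^ s))
end

section
/- Let k be a positive integer and define φ_k(n) to be the number of k-tuples (a₁,…,a_k) with 1 ≤ aᵢ ≤ n such that gcd(a₁⋯a_k, n) = 1 and gcd(a₁+⋯+a_k, n) = 1. Then φ_k is a multiplicative arithmetic function. -/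
/-!
Reducing modulo `n` identifies the tuples counted by `φ_k(n)` with the tuples in `(ℤ/nℤ)^k`
whose product and sum are both units. For coprime `m` and `n`, the Chinese remainder theorem
`ℤ/mnℤ ≃ ℤ/mℤ × ℤ/nℤ` is a ring isomorphism, so it commutes with products and sums, and an
element of a product ring is a unit exactly when both components are. Hence such tuples modulo
`mn` correspond to pairs of such tuples modulo `m` and modulo `n`.
-/

/-- The `k`-dimensional generalized Euler function `φ_k(n)`: the number of
`k`-tuples `(a₁,…,a_k)` with `1 ≤ aᵢ ≤ n`, `gcd(a₁⋯a_k, n) = 1` and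
`gcd(a₁+⋯+a_k, n) = 1`. -/
def tothPhi (k n : ℕ) : ℕ :=
  ((Fintype.piFinset fun _ : Fin k => Finset.Icc 1 n).filter
    (fun a => Nat.gcd (∏ i, a i) n = 1 ∧ Nat.gcd (∑ i, a i) n = 1)).card

def IsTothTuple {ι R : Type*} [Fintype ι] [CommSemiring R] (f : ι → R) : Prop :=
  IsUnit (∏ i, f i) ∧ IsUnit (∑ i, f i)

section IsTothTuple

variable {ι R S T : Type*} [Fintype ι] [CommSemiring R] [CommSemiring S] [CommSemiring T]

lemma isTothTuple_comp_ringEquiv_iff (e : R ≃+* S) (f : ι → R) :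
    IsTothTuple (e ∘ f) ↔ IsTothTuple f := by
  simp only [IsTothTuple, Function.comp_apply, ← map_prod, ← map_sum, isUnit_map_iff]

lemma isTothTuple_prod_iff (f : ι → S × T) :
    IsTothTuple f ↔ IsTothTuple (Prod.fst ∘ f) ∧ IsTothTuple (Prod.snd ∘ f) := by
  simp only [IsTothTuple, Prod.isUnit_iff, Prod.fst_prod, Prod.snd_prod, Prod.fst_sum,
    Prod.snd_sum, Function.comp_apply]
  tauto

def isTothTupleEquivOfRingEquiv (e : R ≃+* S × T) :
    {f : ι → R // IsTothTuple f} ≃ {f : ι → S // IsTothTuple f} × {g : ι → T // IsTothTuple g} :=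
  ((Equiv.subtypeEquiv (Equiv.arrowCongr (Equiv.refl ι) e.toEquiv) fun f =>
      (isTothTuple_comp_ringEquiv_iff e f).symm).trans
    (Equiv.subtypeEquiv (Equiv.arrowProdEquivProdArrow ι (fun _ => S) (fun _ => T))
      isTothTuple_prod_iff)).trans
    Equiv.subtypeProdEquivProd

end IsTothTuple

lemma isTothTuple_natCast_iff {ι : Type*} [Fintype ι] (n : ℕ) (a : ι → ℕ) :
    IsTothTuple (fun i => (a i : ZMod n)) ↔
      Nat.gcd (∏ i, a i) n = 1 ∧ Nat.gcd (∑ i, a i) n = 1 := by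
  simp only [IsTothTuple, ← Nat.cast_prod, ← Nat.cast_sum, ZMod.isUnit_iff_coprime]

/- `x ↦ (x - 1).val + 1` picks the representative of `x` in `[1, n]` rather than `[0, n)`. -/
lemma ZMod.natCast_val_sub_one_add_one {n : ℕ} [NeZero n] (x : ZMod n) :
    (((x - 1).val + 1 : ℕ) : ZMod n) = x := by
  rw [Nat.cast_add, ZMod.natCast_zmod_val, Nat.cast_one, sub_add_cancel]

lemma ZMod.val_natCast_sub_one_add_one_s2 {n a : ℕ} (ha : a ∈ Finset.Icc 1 n) :
    ((a : ZMod n) - 1).val + 1 = a := by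
  obtain ⟨h1, h2⟩ := Finset.mem_Icc.mp ha
  rw [← Nat.cast_pred h1, ZMod.val_natCast_of_lt (by omega)]
  omega

lemma tothPhi_eq_card (k n : ℕ) [NeZero n] :
    tothPhi k n = Nat.card {f : Fin k → ZMod n // IsTothTuple f} := by
  classical
  rw [Nat.card_eq_fintype_card, Fintype.card_subtype, tothPhi]
  refine Finset.card_nbij' (fun a i => (a i : ZMod n)) (fun f i => (f i - 1).val + 1)
    ?_ ?_ ?_ ?_
  · intro a ha
    simp only [Finset.mem_coe, Finset.mem_filter, Finset.mem_univ, true_and] at ha ⊢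
    exact (isTothTuple_natCast_iff n a).mpr ha.2
  · intro f hf
    simp only [Finset.mem_coe, Finset.mem_filter, Finset.mem_univ, true_and,
      Fintype.mem_piFinset] at hf ⊢
    refine ⟨fun i => Finset.mem_Icc.mpr ⟨by omega, Nat.succ_le_of_lt (ZMod.val_lt _)⟩, ?_⟩
    rw [← isTothTuple_natCast_iff]
    simpa only [ZMod.natCast_val_sub_one_add_one] using hf
  · intro a ha
    simp only [Finset.mem_coe, Finset.mem_filter, Fintype.mem_piFinset] at ha
    funext i
    exact ZMod.val_natCast_sub_one_add_one_s2 (ha.1 i)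
  · intro f _
    funext i
    exact ZMod.natCast_val_sub_one_add_one (f i)

lemma tothPhi_one (k : ℕ) : tothPhi k 1 = 1 := by
  rw [tothPhi_eq_card]
  have : Nonempty {f : Fin k → ZMod 1 // IsTothTuple f} :=
    ⟨⟨0, isUnit_of_subsingleton _, isUnit_of_subsingleton _⟩⟩
  exact Nat.card_unique

lemma tothPhi_mul_of_pos (k : ℕ) {m n : ℕ} (hm : 0 < m) (hn : 0 < n) (h : Nat.Coprime m n) :
    tothPhi k (m * n) = tothPhi k m * tothPhi k n := by
  have : NeZero m := ⟨hm.ne'⟩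
  have : NeZero n := ⟨hn.ne'⟩
  have : NeZero (m * n) := ⟨(Nat.mul_pos hm hn).ne'⟩
  rw [tothPhi_eq_card, tothPhi_eq_card, tothPhi_eq_card, ← Nat.card_prod]
  exact Nat.card_congr (isTothTupleEquivOfRingEquiv (ZMod.chineseRemainder h))

lemma tothPhi_mul (k : ℕ) {m n : ℕ} (h : Nat.Coprime m n) :
    tothPhi k (m * n) = tothPhi k m * tothPhi k n := by
  rcases Nat.eq_zero_or_pos m with rfl | hm
  · simp [(Nat.coprime_zero_left n).mp h, tothPhi_one]
  rcases Nat.eq_zero_or_pos n with rfl | hn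
  · simp [(Nat.coprime_zero_right m).mp h, tothPhi_one]
  exact tothPhi_mul_of_pos k hm hn h

theorem tothPhi_multiplicative_general (k : ℕ) :
    tothPhi k 1 = 1 ∧
      ∀ m n : ℕ, Nat.Coprime m n → tothPhi k (m * n) = tothPhi k m * tothPhi k n :=
  ⟨tothPhi_one k, fun _ _ => tothPhi_mul k⟩

/-- For every positive integer `k`, the function `φ_k` is multiplicative:
`φ_k(1) = 1` and `φ_k(mn) = φ_k(m)·φ_k(n)` whenever `gcd(m,n) = 1`. -/
theorem tothPhi_multiplicative (k : ℕ) (hk : 0 < k) :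
    tothPhi k 1 = 1 ∧
      ∀ m n : ℕ, Nat.Coprime m n → tothPhi k (m * n) = tothPhi k m * tothPhi k n :=
  tothPhi_multiplicative_general k
end

section
/- For all positive integers k, n and integer s ≥ 0, ∑ gcd(a₁+⋯+a_k−1, b₁, …, b_s, n) = φ_k(n)·σ_s(n), where the sum runs over all tuples with 1 ≤ aᵢ, bⱼ ≤ n satisfying gcd(a₁⋯a_k, n) = 1 and gcd(a₁+⋯+a_k, n) = 1. -/
open Finset
open scoped Nat Classical

theorem Nat.gcd_eq_sum_totient_filter_dvd (x : ℕ) {n : ℕ} (hn : n ≠ 0) :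
    Nat.gcd x n = ∑ d ∈ n.divisors with d ∣ x, φ d := by
  have hfilter : {d ∈ n.divisors | d ∣ x} = {d ∈ n.divisors | d ∣ Nat.gcd x n} :=
    filter_congr fun d hd => by rw [Nat.dvd_gcd_iff, and_iff_left (Nat.dvd_of_mem_divisors hd)]
  rw [hfilter, Nat.divisors_filter_dvd_of_dvd hn (Nat.gcd_dvd_right x n), Nat.sum_totient]

theorem sum_sum_gcd_gcd_eq_sum_divisors {α β : Type*} (A : Finset α) (B : Finset β) (f : α → ℕ) (g : β → ℕ)
    {n : ℕ} (hn : n ≠ 0) :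
    ∑ a ∈ A, ∑ b ∈ B, Nat.gcd (Nat.gcd (f a) (g b)) n =
      ∑ d ∈ n.divisors, φ d * #{a ∈ A | d ∣ f a} * #{b ∈ B | d ∣ g b} := by
  calc ∑ a ∈ A, ∑ b ∈ B, Nat.gcd (Nat.gcd (f a) (g b)) n
      = ∑ a ∈ A, ∑ b ∈ B, ∑ d ∈ n.divisors, if d ∣ f a ∧ d ∣ g b then φ d else 0 := by
        simp only [Nat.gcd_eq_sum_totient_filter_dvd _ hn, sum_filter, Nat.dvd_gcd_iff]
    _ = ∑ d ∈ n.divisors, ∑ a ∈ A, ∑ b ∈ B, if d ∣ f a ∧ d ∣ g b then φ d else 0 :=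
        (sum_congr rfl fun _ _ => sum_comm).trans sum_comm
    _ = ∑ d ∈ n.divisors, φ d * #{a ∈ A | d ∣ f a} * #{b ∈ B | d ∣ g b} := by
        refine sum_congr rfl fun d _ => ?_
        rw [card_filter, card_filter, mul_sum A, sum_mul_sum]
        refine sum_congr rfl fun a _ => sum_congr rfl fun b _ => ?_
        split_ifs <;> simp_all

theorem card_filter_piFinset_Icc_dvd_gcd (n d s : ℕ) :
    #{b ∈ Fintype.piFinset fun _ : Fin s => Icc 1 n | d ∣ univ.gcd b} = (n / d) ^ s := by
  have : {b ∈ Fintype.piFinset fun _ : Fin s => Icc 1 n | d ∣ univ.gcd b} =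
      Fintype.piFinset fun _ : Fin s => {x ∈ Icc 1 n | d ∣ x} := by
    ext b
    simp [Finset.dvd_gcd_iff, forall_and]
  rw [this, Fintype.card_piFinset_const, ← Nat.Ioc_filter_dvd_card_eq_div]
  rfl

theorem Nat.dvd_sub_one_iff_natCast_eq_one {x n d : ℕ} (hx : x.Coprime n) (hd : d ∣ n) :
    d ∣ x - 1 ↔ (x : ZMod d) = 1 := by
  rcases Nat.eq_zero_or_pos x with rfl | hx0
  · -- `0 - 1` truncates to `0` in `ℕ`; coprimality forces `d = 1`
    obtain rfl : d = 1 := Nat.dvd_one.mp ((Nat.coprime_zero_left n).mp hx ▸ hd)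
    simp [Subsingleton.elim (0 : ZMod 1) 1]
  · rw [← Nat.modEq_iff_dvd' hx0, Nat.ModEq.comm, ← ZMod.natCast_eq_natCast_iff, Nat.cast_one]

theorem card_filter_isUnit_and {M : Type*} [Monoid M] [Fintype M] [DecidableEq M] (p : M → Prop)
    [DecidablePred p] :
    #{c : M | IsUnit c ∧ p c} = #{u : Mˣ | p u} := by
  symm
  refine card_bij (fun u _ => (u : M)) (fun u hu => ?_) (fun _ _ _ _ => Units.ext) fun c hc => ?_
  · simpa using hu
  · obtain ⟨⟨u, rfl⟩, hp⟩ := (mem_filter.mp hc).2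
    exact ⟨u, by simpa using hp, rfl⟩

section UnitTuples

variable (R : Type*) [CommRing R] [Fintype R] (k : ℕ)

/-- The tuples counted by `φ_k`, over an arbitrary finite commutative ring. -/
noncomputable def unitTuples : Finset (Fin k → R) :=
  {v | IsUnit (∏ i, v i) ∧ IsUnit (∑ i, v i)}

variable {R k}

theorem smul_mem_unitTuples_iff (u : Rˣ) (v : Fin k → R) :
    u • v ∈ unitTuples R k ↔ v ∈ unitTuples R k := by
  simp [unitTuples, ← smul_sum]

variable [DecidableEq R]

theorem card_filter_unitTuples_sum_eq_units_mul (u : Rˣ) (c : R) :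
    #{v ∈ unitTuples R k | ∑ i, v i = u * c} = #{v ∈ unitTuples R k | ∑ i, v i = c} := by
  refine card_equiv (MulAction.toPerm u⁻¹) fun v => ?_
  rw [mem_filter, mem_filter, MulAction.toPerm_apply, smul_mem_unitTuples_iff]
  simp only [Pi.smul_apply]
  rw [← smul_sum, inv_smul_eq_iff, Units.smul_def, smul_eq_mul]

theorem card_filter_unitTuples_sum (p : R → Prop) [DecidablePred p] :
    #{v ∈ unitTuples R k | p (∑ i, v i)} =
      #{c : R | IsUnit c ∧ p c} * #{v ∈ unitTuples R k | ∑ i, v i = 1} := by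
  rw [card_eq_sum_card_fiberwise (f := fun v => ∑ i, v i) (t := {c : R | IsUnit c ∧ p c}),
    card_eq_sum_ones, sum_mul, one_mul]
  · refine sum_congr rfl fun c hc => ?_
    obtain ⟨⟨u, rfl⟩, hp⟩ := (mem_filter.mp hc).2
    rw [filter_filter, ← card_filter_unitTuples_sum_eq_units_mul u 1, mul_one]
    exact congrArg card (filter_congr fun v _ => and_iff_right_of_imp fun h => h ▸ hp)
  · intro v hv
    simp_all [unitTuples]

end UnitTuples

namespace ZMod

theorem card_filter_isUnit (n : ℕ) [NeZero n] : #{c : ZMod n | IsUnit c} = φ n := by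
  have := card_filter_isUnit_and (fun _ : ZMod n => True)
  simp only [and_true, filter_true, card_univ] at this
  rw [this, card_units_eq_totient]

theorem card_filter_isUnit_castHom_eq_one_mul_totient {n d : ℕ} [NeZero n] (hd : d ∣ n) :
    #{c : ZMod n | IsUnit c ∧ castHom hd (ZMod d) c = 1} * φ d = φ n := by
  have : NeZero d := ⟨ne_zero_of_dvd_ne_zero (NeZero.ne n) hd⟩
  have hker : #{c : ZMod n | IsUnit c ∧ castHom hd (ZMod d) c = 1} =
      Nat.card (unitsMap hd).ker := by
    rw [card_filter_isUnit_and, Nat.card_eq_fintype_card, Fintype.card_subtype]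
    congr 1; ext u
    simp only [mem_filter, mem_univ, true_and, MonoidHom.mem_ker, unitsMap_def, Units.ext_iff,
      Units.coe_map, Units.val_one, MonoidHom.coe_coe]
  have hindex : (unitsMap hd).ker.index = φ d := by
    rw [Subgroup.index_ker, MonoidHom.range_eq_top_of_surjective _ (unitsMap_surjective hd),
      Subgroup.card_top, Nat.card_eq_fintype_card, card_units_eq_totient]
  rw [hker, ← hindex, Subgroup.card_mul_index, Nat.card_eq_fintype_card, card_units_eq_totient]

theorem totient_mul_card_filter_unitTuples_castHom_sum_eq_one {n d : ℕ} [NeZero n] (hd : d ∣ n)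
    (k : ℕ) :
    φ d * #{v ∈ unitTuples (ZMod n) k | castHom hd (ZMod d) (∑ i, v i) = 1} =
      #(unitTuples (ZMod n) k) := by
  have hall := card_filter_unitTuples_sum (R := ZMod n) (k := k) fun _ => True
  simp only [filter_true, and_true, card_filter_isUnit] at hall
  rw [card_filter_unitTuples_sum fun c => castHom hd (ZMod d) c = 1, hall, ← mul_assoc,
    mul_comm (φ d), card_filter_isUnit_castHom_eq_one_mul_totient]

theorem natCast_injOn_Icc (n : ℕ) : Set.InjOn (Nat.cast : ℕ → ZMod n) (Icc 1 n) := by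
  intro x hx y hy h
  simp only [coe_Icc, Set.mem_Icc] at hx hy
  refine ((natCast_eq_natCast_iff _ _ _).mp h).eq_of_abs_lt ?_
  rw [abs_sub_lt_iff]
  omega

theorem card_filter_piFinset_Icc_natCast (n k : ℕ) [NeZero n] (q : (Fin k → ZMod n) → Prop)
    [DecidablePred q] :
    #{a ∈ Fintype.piFinset fun _ : Fin k => Icc 1 n | q fun i => (a i : ZMod n)} = #{v | q v} := by
  set P := Fintype.piFinset fun _ : Fin k => Icc 1 n
  set toZMod : (Fin k → ℕ) → Fin k → ZMod n := fun a i => a i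
  have hinj : Set.InjOn toZMod P := fun a ha b hb h => funext fun i =>
    natCast_injOn_Icc n (Fintype.mem_piFinset.mp ha i) (Fintype.mem_piFinset.mp hb i)
      (congrFun h i)
  have himage : P.image toZMod = univ := by
    refine eq_univ_of_card _ ?_
    rw [card_image_of_injOn hinj]
    simp [P]
  rw [← card_image_of_injOn (hinj.mono (filter_subset _ _)), ← filter_image, himage]

theorem natCast_mem_unitTuples_iff {n k : ℕ} [NeZero n] (a : Fin k → ℕ) :
    (fun i => (a i : ZMod n)) ∈ unitTuples (ZMod n) k ↔
      Nat.gcd (∏ i, a i) n = 1 ∧ Nat.gcd (∑ i, a i) n = 1 := by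
  simp only [unitTuples, mem_filter, mem_univ, true_and, ← Nat.cast_prod, ← Nat.cast_sum,
    isUnit_iff_coprime, Nat.coprime_iff_gcd_eq_one]

end ZMod

theorem tothPhi_eq_card_unitTuples (k n : ℕ) [NeZero n] :
    tothPhi k n = #(unitTuples (ZMod n) k) := by
  rw [tothPhi, ← filter_univ_mem (unitTuples (ZMod n) k), ← ZMod.card_filter_piFinset_Icc_natCast]
  simp only [ZMod.natCast_mem_unitTuples_iff]

theorem totient_mul_card_filter_dvd_sum_sub_one {k n d : ℕ} [NeZero n] (hd : d ∣ n) :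
    φ d * #{a ∈ {a ∈ Fintype.piFinset fun _ : Fin k => Icc 1 n |
        Nat.gcd (∏ i, a i) n = 1 ∧ Nat.gcd (∑ i, a i) n = 1} | d ∣ (∑ i, a i) - 1} =
      tothPhi k n := by
  have hcount : #{a ∈ {a ∈ Fintype.piFinset fun _ : Fin k => Icc 1 n |
        Nat.gcd (∏ i, a i) n = 1 ∧ Nat.gcd (∑ i, a i) n = 1} | d ∣ (∑ i, a i) - 1} =
      #{v ∈ unitTuples (ZMod n) k | ZMod.castHom hd (ZMod d) (∑ i, v i) = 1} := by
    rw [filter_filter, ← filter_univ_mem (unitTuples (ZMod n) k), filter_filter,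
      ← ZMod.card_filter_piFinset_Icc_natCast]
    refine congrArg card (filter_congr fun a _ => ?_)
    rw [ZMod.natCast_mem_unitTuples_iff, ← Nat.cast_sum, map_natCast]
    exact and_congr_right fun h => Nat.dvd_sub_one_iff_natCast_eq_one h.2 hd
  rw [hcount, ZMod.totient_mul_card_filter_unitTuples_castHom_sum_eq_one,
    tothPhi_eq_card_unitTuples]

theorem toth_sury_identity_general (k n : ℕ) (hn : 0 < n) (s : ℕ) :
    ∑ a ∈ (Fintype.piFinset fun _ : Fin k => Finset.Icc 1 n).filter
        (fun a => Nat.gcd (∏ i, a i) n = 1 ∧ Nat.gcd (∑ i, a i) n = 1),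
      ∑ b ∈ Fintype.piFinset (fun _ : Fin s => Finset.Icc 1 n),
        Nat.gcd (Nat.gcd ((∑ i, a i) - 1) (Finset.univ.gcd b)) n =
      tothPhi k n * ∑ d ∈ n.divisors, d ^ s := by
  have : NeZero n := ⟨hn.ne'⟩
  rw [sum_sum_gcd_gcd_eq_sum_divisors _ _ (fun a : Fin k → ℕ => (∑ i, a i) - 1)
      (fun b : Fin s → ℕ => univ.gcd b) hn.ne', ← Nat.sum_div_divisors n (· ^ s), mul_sum]
  refine sum_congr rfl fun d hd => ?_
  rw [totient_mul_card_filter_dvd_sum_sub_one (Nat.dvd_of_mem_divisors hd),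
    card_filter_piFinset_Icc_dvd_gcd]

/-- Combined Tóth–Sury identity: for all positive integers `k`, `n` and `s ≥ 0`,
`∑ gcd(a₁+⋯+a_k−1, b₁, …, b_s, n) = φ_k(n) · σ_s(n)`, the sum running over all
`1 ≤ aᵢ, bⱼ ≤ n` with `gcd(a₁⋯a_k,n) = 1` and `gcd(a₁+⋯+a_k,n) = 1`. -/
theorem toth_sury_identity (k n : ℕ) (hk : 0 < k) (hn : 0 < n) (s : ℕ) :
    ∑ a ∈ (Fintype.piFinset fun _ : Fin k => Finset.Icc 1 n).filter
        (fun a => Nat.gcd (∏ i, a i) n = 1 ∧ Nat.gcd (∑ i, a i) n = 1),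
      ∑ b ∈ Fintype.piFinset (fun _ : Fin s => Finset.Icc 1 n),
        Nat.gcd (Nat.gcd ((∑ i, a i) - 1) (Finset.univ.gcd b)) n =
      tothPhi k n * ∑ d ∈ n.divisors, d ^ s :=
  toth_sury_identity_general k n hn s
end

section
/- Let K be a number field with ring of integers O_K and 𝔫 a nonzero ideal. For a positive integer k, define φ_k(𝔫) as the number of k-tuples (a₁,…,a_k) of units of O_K/𝔫 such that a₁+⋯+a_k is also a unit of O_K/𝔫. Then φ_k(𝔫) = φ(𝔫)^k · ∏_{𝔭 | 𝔫} (1 − 1/(N(𝔭)−1) + 1/(N(𝔭)−1)² + ⋯ + (−1)^{k−1}/(N(𝔭)−1)^{k−1}). -/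
/-!
Write `φ_k(R)` for the number of `UnitSumTuples R k`. By the Chinese remainder theorem
`𝓞 K ⧸ 𝔫 ≃ ∏ 𝓞 K ⧸ 𝔭 ^ e`, and both sides of the formula are
multiplicative over such products, so it suffices to count in a finite local ring `R` with
maximal ideal `𝔪` and residue field of size `q`. A `(k + 1)`-tuple of units with non-unit sum is
the same as its sum `s ∈ 𝔪` together with its first `k` entries, which must have unit sum (the last
entry `s - ∑` is then automatically a unit). Hence `φ_{k+1} = |Rˣ| ^ (k + 1) - |𝔪| φ_k`, and since
`|Rˣ| = |𝔪| (q - 1)`, this recursion with `φ_0 = 0` is solved by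
`φ_k = |Rˣ| ^ k ∑_{j < k} (-1 / (q - 1)) ^ j`.
-/

open Finset IsLocalRing NumberField UniqueFactorizationMonoid

abbrev UnitSumTuples (R : Type*) [CommRing R] (k : ℕ) : Type _ :=
  {v : Fin k → Rˣ // IsUnit (∑ i, (v i : R))}

namespace UnitSumTuples

def congr {R S : Type*} [CommRing R] [CommRing S] (e : R ≃+* S) (k : ℕ) :
    UnitSumTuples R k ≃ UnitSumTuples S k :=
  Equiv.subtypeEquiv (Equiv.piCongrRight fun _ => (Units.mapEquiv e.toMulEquiv).toEquiv) fun v => by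
    simp [← map_sum]

def piEquiv {ι : Type*} (R : ι → Type*) [∀ i, CommRing (R i)] (k : ℕ) :
    UnitSumTuples (∀ i, R i) k ≃ ∀ i, UnitSumTuples (R i) k where
  toFun v i := ⟨fun j => MulEquiv.piUnits (v.1 j) i, by
    simpa [Finset.sum_apply] using Pi.isUnit_iff.mp v.2 i⟩
  invFun w := ⟨fun j => MulEquiv.piUnits.symm fun i => (w i).1 j,
    Pi.isUnit_iff.mpr fun i => by simpa [Finset.sum_apply] using (w i).2⟩
  left_inv v := by ext; simp
  right_inv w := by ext; simp

end UnitSumTuples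

section IsLocalRing

variable {R : Type*} [CommRing R] [IsLocalRing R]

theorem IsLocalRing.isUnit_add_of_mem_maximalIdeal {a u : R} (ha : a ∈ maximalIdeal R)
    (hu : IsUnit u) : IsUnit (a + u) := by
  by_contra h
  exact notMem_maximalIdeal.mpr hu (by simpa using sub_mem ((mem_maximalIdeal _).mpr h) ha)

noncomputable def nonunitSumTuplesEquiv (k : ℕ) :
    {v : Fin (k + 1) → Rˣ // ¬ IsUnit (∑ i, (v i : R))} ≃ maximalIdeal R × UnitSumTuples R k where
  toFun v := (⟨∑ i, (v.1 i : R), v.2⟩, ⟨Fin.init v.1, by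
    have := isUnit_add_of_mem_maximalIdeal ((mem_maximalIdeal _).mpr v.2)
      (v.1 (Fin.last k)).isUnit.neg
    simpa [Fin.sum_univ_castSucc, Fin.init] using this⟩)
  invFun p := ⟨Fin.snoc p.2.1 (isUnit_add_of_mem_maximalIdeal p.1.2 p.2.2.neg).unit, by
    simpa [Fin.sum_univ_castSucc] using (mem_maximalIdeal _).mp p.1.2⟩
  left_inv v := by
    ext i
    refine Fin.lastCases ?_ (fun j => ?_) i
    · simp [Fin.sum_univ_castSucc, Fin.init]
    · simp [Fin.init]
  right_inv p := by
    ext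
    · simp [Fin.sum_univ_castSucc]
    · simp

variable [Finite R]

theorem IsLocalRing.card_units_add_card_maximalIdeal :
    Nat.card Rˣ + Nat.card (maximalIdeal R) = Nat.card R := by
  classical
  rw [← Nat.card_sum]
  exact Nat.card_congr <| (Equiv.sumCongr (Equiv.ofInjective _ Units.val_injective)
    (Equiv.subtypeEquivRight fun x => (mem_maximalIdeal x).trans mem_nonunits_iff)).trans
    (Equiv.sumCompl IsUnit)

theorem card_unitSumTuples_succ_add (k : ℕ) :
    Nat.card (UnitSumTuples R (k + 1)) + Nat.card (maximalIdeal R) * Nat.card (UnitSumTuples R k) =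
      Nat.card Rˣ ^ (k + 1) := by
  classical
  rw [← Nat.card_prod, ← Nat.card_congr (nonunitSumTuplesEquiv k), ← Nat.card_sum,
    Nat.card_congr (Equiv.sumCompl _), Nat.card_fun, Nat.card_fin]

theorem card_unitSumTuples (k : ℕ) :
    (Nat.card (UnitSumTuples R k) : ℚ) =
      Nat.card Rˣ ^ k * ∑ j ∈ range k, (-1) ^ j / ((Nat.card (ResidueField R) : ℚ) - 1) ^ j := by
  have : Finite (ResidueField R) := Finite.of_surjective _ residue_surjective
  have hq : (Nat.card (ResidueField R) : ℚ) - 1 ≠ 0 :=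
    sub_ne_zero.mpr (by exact_mod_cast (Finite.one_lt_card (α := ResidueField R)).ne')
  have hu : (Nat.card Rˣ : ℚ) = Nat.card (maximalIdeal R) * (Nat.card (ResidueField R) - 1) := by
    have h := card_units_add_card_maximalIdeal (R := R)
    rw [(maximalIdeal R).card_eq_card_quotient_mul_card] at h
    linear_combination (by exact_mod_cast h : (Nat.card Rˣ + Nat.card (maximalIdeal R) : ℚ) =
      Nat.card (maximalIdeal R) * Nat.card (ResidueField R))
  simp only [← div_pow]
  induction k with
  | zero =>
    have : IsEmpty (UnitSumTuples R 0) := ⟨fun v => not_isUnit_zero (M₀ := R) (by simpa using v.2)⟩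
    simp
  | succ k ih =>
    have hrec : (Nat.card (UnitSumTuples R (k + 1)) : ℚ) +
        Nat.card (maximalIdeal R) * Nat.card (UnitSumTuples R k) = Nat.card Rˣ ^ (k + 1) := by
      exact_mod_cast card_unitSumTuples_succ_add k
    rw [geom_sum_succ, eq_sub_of_add_eq hrec, ih, hu]
    field_simp
    ring

end IsLocalRing

section QuotientPow

variable {A : Type*} [CommRing A] {P : Ideal A} [P.IsMaximal] {e : ℕ}

theorem Ideal.eq_map_of_isMaximal_quotient_pow (M : Ideal (A ⧸ P ^ e)) [M.IsMaximal] :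
    M = P.map (Ideal.Quotient.mk (P ^ e)) := by
  have hmax : (M.comap (Ideal.Quotient.mk (P ^ e))).IsMaximal :=
    Ideal.comap_isMaximal_of_surjective _ Ideal.Quotient.mk_surjective
  have hle : P ≤ M.comap (Ideal.Quotient.mk (P ^ e)) :=
    Ideal.IsPrime.le_of_pow_le (n := e) fun x hx => by simp [Ideal.Quotient.eq_zero_iff_mem.mpr hx]
  calc M = (M.comap (Ideal.Quotient.mk (P ^ e))).map (Ideal.Quotient.mk (P ^ e)) :=
        (Ideal.map_comap_of_surjective _ Ideal.Quotient.mk_surjective M).symm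
    _ = P.map (Ideal.Quotient.mk (P ^ e)) := by rw [← ‹P.IsMaximal›.eq_of_le hmax.ne_top hle]

theorem Ideal.isLocalRing_quotient_pow (he : e ≠ 0) : IsLocalRing (A ⧸ P ^ e) := by
  have : Nontrivial (A ⧸ P ^ e) := Ideal.Quotient.nontrivial_iff.mpr
    (ne_top_of_le_ne_top (Ideal.IsMaximal.ne_top ‹_›) (Ideal.pow_le_self he))
  obtain ⟨M, hM⟩ := Ideal.exists_maximal (A ⧸ P ^ e)
  exact .of_unique_max_ideal ⟨M, hM, fun N _ =>
    (Ideal.eq_map_of_isMaximal_quotient_pow N).trans (Ideal.eq_map_of_isMaximal_quotient_pow M).symm⟩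

theorem card_unitSumTuples_quotient_pow (he : e ≠ 0) [Finite (A ⧸ P ^ e)] (k : ℕ) :
    (Nat.card (UnitSumTuples (A ⧸ P ^ e) k) : ℚ) =
      Nat.card (A ⧸ P ^ e)ˣ ^ k * ∑ j ∈ range k, (-1) ^ j / ((Nat.card (A ⧸ P) : ℚ) - 1) ^ j := by
  have := Ideal.isLocalRing_quotient_pow (P := P) he
  have hres : Nat.card (ResidueField (A ⧸ P ^ e)) = Nat.card (A ⧸ P) :=
    Nat.card_congr <| ((Ideal.quotEquivOfEq (Ideal.eq_map_of_isMaximal_quotient_pow _)).trans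
      (DoubleQuot.quotQuotEquivQuotOfLE (Ideal.pow_le_self he))).toEquiv
  rw [card_unitSumTuples, hres]

end QuotientPow

theorem phi_k_formula_ideal_general (K : Type*) [Field K] [NumberField K]
    (k : ℕ) (𝔫 : Ideal (𝓞 K)) (h𝔫 : 𝔫 ≠ ⊥) :
    (Nat.card {v : Fin k → (𝓞 K ⧸ 𝔫)ˣ //
        IsUnit (∑ i, (v i : 𝓞 K ⧸ 𝔫))} : ℚ) =
      (Nat.card ((𝓞 K ⧸ 𝔫)ˣ) : ℚ) ^ k *
        ∏ᶠ (𝔭 : Ideal (𝓞 K)) (_ : 𝔭.IsPrime ∧ 𝔭 ∣ 𝔫),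
          ∑ j ∈ Finset.range k, (-1 : ℚ) ^ j / ((Ideal.absNorm 𝔭 : ℚ) - 1) ^ j := by
  classical
  let E := IsDedekindDomain.quotientEquivPiFactors h𝔫
  have hprimes {𝔭 : Ideal (𝓞 K)} : 𝔭.IsPrime ∧ 𝔭 ∣ 𝔫 ↔ 𝔭 ∈ (factors 𝔫).toFinset := by
    rw [Multiset.mem_toFinset, factors_eq_normalizedFactors, Ideal.mem_normalizedFactors_iff h𝔫,
      Ideal.dvd_iff_le]
  rw [finprod_cond_eq_prod_of_cond_iff _ fun _ => hprimes,
    Nat.card_congr ((UnitSumTuples.congr E k).trans (UnitSumTuples.piEquiv _ k)), Nat.card_pi,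
    Nat.card_congr (Units.mapEquiv E.toMulEquiv |>.trans MulEquiv.piUnits).toEquiv, Nat.card_pi]
  push_cast
  rw [← prod_pow, ← prod_coe_sort (factors 𝔫).toFinset, ← prod_mul_distrib]
  refine prod_congr rfl fun ⟨𝔭, h𝔭𝔫⟩ _ => ?_
  have h𝔭 : Prime 𝔭 := prime_of_factor _ (Multiset.mem_toFinset.mp h𝔭𝔫)
  have : 𝔭.IsMaximal := (Ideal.isPrime_of_prime h𝔭).isMaximal h𝔭.ne_zero
  have := Ideal.finiteQuotientOfFreeOfNeBot (𝔭 ^ (factors 𝔫).count 𝔭) (pow_ne_zero _ h𝔭.ne_zero)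
  rw [card_unitSumTuples_quotient_pow (Multiset.count_ne_zero.mpr (Multiset.mem_toFinset.mp h𝔭𝔫)),
    Ideal.absNorm_apply, Submodule.cardQuot_apply]

/-- The `k`-dimensional generalized Euler function in the ring of algebraic
integers: for a nonzero ideal `𝔫` of `𝓞 K`, the number `φ_k(𝔫)` of `k`-tuples of
units of `𝓞 K ⧸ 𝔫` whose sum is a unit equals
`φ(𝔫)^k · ∏_{𝔭 ∣ 𝔫} (1 − 1/(N(𝔭)−1) + ⋯ + (−1)^{k−1}/(N(𝔭)−1)^{k−1})`. -/
theorem phi_k_formula_ideal (K : Type*) [Field K] [NumberField K]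
    (k : ℕ) (hk : 0 < k) (𝔫 : Ideal (𝓞 K)) (h𝔫 : 𝔫 ≠ ⊥) :
    (Nat.card {v : Fin k → (𝓞 K ⧸ 𝔫)ˣ //
        IsUnit (∑ i, (v i : 𝓞 K ⧸ 𝔫))} : ℚ) =
      (Nat.card ((𝓞 K ⧸ 𝔫)ˣ) : ℚ) ^ k *
        ∏ᶠ (𝔭 : Ideal (𝓞 K)) (_ : 𝔭.IsPrime ∧ 𝔭 ∣ 𝔫),
          ∑ j ∈ Finset.range k, (-1 : ℚ) ^ j / ((Ideal.absNorm 𝔭 : ℚ) - 1) ^ j :=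
  phi_k_formula_ideal_general K k 𝔫 h𝔫
end

section
/- Let K be a number field with ring of integers O_K, 𝔫 a nonzero ideal, and 𝔪 an ideal dividing 𝔫. Define φ_k(𝔫, 𝔪) as the number of k-tuples (a₁,…,a_k) of units of O_K/𝔫 whose sum a₁+⋯+a_k maps to a unit of O_K/𝔪. Then for k ≥ 2, φ_k(𝔫, 𝔪) = φ(𝔫) · ∑_{𝔡 | 𝔪} μ(𝔡)/φ(𝔡) · φ_{k−1}(𝔫, 𝔡), where μ is the Möbius function on nonzero ideals of O_K. -/
open NumberField

set_option synthInstance.maxHeartbeats 1000000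
set_option maxHeartbeats 1000000

open Classical in
/-- The Möbius function on nonzero ideals of `𝓞 K`: `μ(𝓞 K) = 1`, `μ` of a
product of `t` distinct prime ideals is `(−1)^t`, and `μ` is `0` otherwise. -/
noncomputable def idealMoebius (K : Type*) [Field K] [NumberField K]
    (I : Ideal (𝓞 K)) : ℤ :=
  if I = ⊤ then 1
  else if Squarefree I then (-1) ^ (UniqueFactorizationMonoid.factors I).toFinset.card
  else 0

/-- `φ_k(𝔫, 𝔪)`: the number of `k`-tuples of units of `𝓞 K ⧸ 𝔫` whose sum maps to
a unit of `𝓞 K ⧸ 𝔪`. -/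
noncomputable def phiPairIdeal (K : Type*) [Field K] [NumberField K]
    (k : ℕ) (𝔫 𝔪 : Ideal (𝓞 K)) : ℕ :=
  Nat.card {v : Fin k → (𝓞 K ⧸ 𝔫)ˣ //
    ∀ y : 𝓞 K, Ideal.Quotient.mk 𝔫 y = ∑ i, (v i : 𝓞 K ⧸ 𝔫) →
      IsUnit (Ideal.Quotient.mk 𝔪 y)}

/-! Splitting off the first coordinate, `φ_{m+1}(𝔫, 𝔪)` counts pairs `(u, w)` of a unit `u` and
an `m`-tuple of units `w` such that `u + Σ w` is a unit modulo `𝔪`. Möbius inversion over the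
divisors of `𝔪 ⊔ (x)` writes the indicator of "`x` is a unit modulo `𝔪`" as
`Σ_{𝔡 ∣ 𝔪} μ(𝔡) [x ∈ 𝔡]`. For fixed `w`, the units `u ≡ -Σ w (mod 𝔡)` form a fibre of the
surjection `(𝓞 K/𝔫)ˣ → (𝓞 K/𝔡)ˣ`, so there are `φ(𝔫)/φ(𝔡)` of them when `Σ w` is a unit modulo
`𝔡` and none otherwise. -/

theorem exists_isIdempotentElem_pow {M : Type*} [Monoid M] [Finite M] (a : M) :
    ∃ n ≠ 0, IsIdempotentElem (a ^ n) := by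
  obtain ⟨i, j, hij, h⟩ := Finite.exists_ne_map_eq_of_infinite fun n : ℕ => a ^ n
  wlog hlt : i < j generalizing i j
  · exact this j i hij.symm h.symm (by omega)
  obtain ⟨p, rfl⟩ := Nat.exists_eq_add_of_lt hlt
  have periodic : ∀ t q, a ^ (i + t + q * (p + 1)) = a ^ (i + t) := by
    intro t q
    induction q with
    | zero => simp
    | succ q ih =>
      rw [show i + t + (q + 1) * (p + 1) = (i + p + 1) + (t + q * (p + 1)) by ring, pow_add,
        ← h, ← pow_add, ← ih]
      ring_nf
  refine ⟨(i + 1) * (p + 1), by positivity, ?_⟩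
  rw [IsIdempotentElem, ← pow_add]
  have := periodic ((i + 1) * (p + 1) - i) (i + 1)
  rw [Nat.add_sub_cancel' (by nlinarith)] at this
  convert this using 2

theorem isUnit_add_one_sub_pow {A : Type*} [CommRing A] {a : A} {n : ℕ} (hn : n ≠ 0)
    (he : IsIdempotentElem (a ^ n)) : IsUnit (a + (1 - a ^ n)) := by
  by_contra hu
  obtain ⟨M, hM, hmem⟩ := exists_max_ideal_of_mem_nonunits hu
  have h1 : (1 : A) ∉ M := (Ideal.ne_top_iff_one M).1 hM.ne_top
  have hprod : a ^ n * (1 - a ^ n) ∈ M := by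
    rw [mul_sub, mul_one, he.eq, sub_self]; exact M.zero_mem
  rcases hM.isPrime.mem_or_mem hprod with he | he'
  · have ha : a ∈ M := hM.isPrime.mem_of_pow_mem n he
    exact h1 (by simpa using M.add_mem (M.sub_mem hmem ha) he)
  · have ha : a ∈ M := by simpa using M.sub_mem hmem he'
    exact h1 (by simpa using M.add_mem he' (M.pow_mem_of_mem ha n (Nat.pos_of_ne_zero hn)))

theorem Units.map_surjective_of_finite {A B : Type*} [CommRing A] [Finite A] [CommRing B]
    {f : A →+* B} (hf : Function.Surjective f) : Function.Surjective (Units.map (f : A →* B)) := by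
  intro b
  obtain ⟨a, ha⟩ := hf b
  -- `f (a ^ n)` is an idempotent unit, hence `1`, so `a + (1 - a ^ n)` is a unit lifting `b`.
  obtain ⟨n, hn, he⟩ := exists_isIdempotentElem_pow a
  have hfe : f (a ^ n) = 1 :=
    (IsIdempotentElem.iff_eq_one_of_isUnit (by simpa [ha] using (b ^ n).isUnit)).1 (he.map f)
  refine ⟨(isUnit_add_one_sub_pow hn he).unit, Units.ext ?_⟩
  simp [hfe, ha]

section Fibres

open Finset

theorem MonoidHom.card_fiber_mul_card_of_surjective {G H : Type*} [Group G] [Fintype G] [Group H]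
    [Fintype H] [DecidableEq H] {φ : G →* H} (hφ : Function.Surjective φ) (h : H) :
    #{g | φ g = h} * Fintype.card H = Fintype.card G := by
  have := card_eq_sum_card_fiberwise (f := φ) (s := univ) (t := univ) (by simp)
  rw [sum_congr rfl fun y _ => card_fiber_eq_of_mem_range φ (hφ y) (hφ h), sum_const, card_univ,
    card_univ, smul_eq_mul] at this
  rw [this, mul_comm]

open Classical in
theorem card_units_apply_add_eq_zero_mul {A B : Type*} [CommRing A] [Finite A]
    [CommRing B] {f : A →+* B} (hf : Function.Surjective f) (s : A) :
    Nat.card {u : Aˣ // f (u + s) = 0} * Nat.card Bˣ =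
      if IsUnit (f s) then Nat.card Aˣ else 0 := by
  have : Finite B := Finite.of_surjective f hf
  have : Fintype A := Fintype.ofFinite A
  have : Fintype B := Fintype.ofFinite B
  split_ifs with hs
  · have hfiber : ∀ u : Aˣ, f (u + s) = 0 ↔ Units.map (f : A →* B) u = -hs.unit := by
      intro u
      rw [map_add, add_eq_zero_iff_eq_neg, Units.ext_iff]
      simp
    simp_rw [hfiber, Nat.card_eq_fintype_card, Fintype.card_subtype]
    exact MonoidHom.card_fiber_mul_card_of_surjective (Units.map_surjective_of_finite hf) _
  · have hempty : IsEmpty {u : Aˣ // f (u + s) = 0} := ⟨fun ⟨u, hu⟩ => hs <| by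
      rw [map_add, add_eq_zero_iff_neg_eq] at hu
      simpa [← hu] using (Units.map (f : A →* B) u).isUnit⟩
    rw [Nat.card_of_isEmpty, zero_mul]

open Classical in
theorem card_unitTuples_succ {A : Type*} [CommRing A] [Finite A] {ι : Type*} [Fintype ι]
    {B : ι → Type*} [∀ i, CommRing (B i)] (f : ∀ i, A →+* B i)
    (hf : ∀ i, Function.Surjective (f i)) (P : A → Prop) (c : ι → ℚ)
    (hP : ∀ a, (if P a then 1 else 0 : ℚ) = ∑ i, c i * if f i a = 0 then 1 else 0) (m : ℕ) :
    (Nat.card {v : Fin (m + 1) → Aˣ // P (∑ j, (v j : A))} : ℚ) =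
      Nat.card Aˣ * ∑ i, c i / Nat.card (B i)ˣ *
        Nat.card {v : Fin m → Aˣ // IsUnit (f i (∑ j, (v j : A)))} := by
  have : Fintype A := Fintype.ofFinite A
  have card_eq_sum : ∀ {X : Type _} [Fintype X] (p : X → Prop),
      (Nat.card {x // p x} : ℚ) = ∑ x, if p x then 1 else 0 := by
    intro X _ p
    rw [Finset.sum_boole, Nat.card_eq_fintype_card, Fintype.card_subtype]
  have fiber : ∀ i s, (∑ u : Aˣ, if f i (u + s) = 0 then 1 else 0 : ℚ) =
      Nat.card Aˣ / Nat.card (B i)ˣ * if IsUnit (f i s) then 1 else 0 := by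
    intro i s
    have : Finite (B i) := Finite.of_surjective _ (hf i)
    have hB : (Nat.card (B i)ˣ : ℚ) ≠ 0 := Nat.cast_ne_zero.2 Nat.card_pos.ne'
    rw [← card_eq_sum, div_mul_eq_mul_div, eq_div_iff hB]
    exact_mod_cast (card_units_apply_add_eq_zero_mul (hf i) s).trans (by split_ifs <;> simp)
  calc (Nat.card {v : Fin (m + 1) → Aˣ // P (∑ j, (v j : A))} : ℚ)
      = ∑ w : Fin m → Aˣ, ∑ u : Aˣ, if P (u + ∑ j, (w j : A)) then 1 else 0 := by
        rw [card_eq_sum, ← (Fin.consEquiv fun _ => Aˣ).sum_comp, Fintype.sum_prod_type,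
          Finset.sum_comm]
        simp [Fin.sum_univ_succ]
    _ = ∑ i, c i * ∑ w : Fin m → Aˣ, ∑ u : Aˣ, if f i (u + ∑ j, (w j : A)) = 0 then 1 else 0 := by
        simp_rw [hP, Finset.mul_sum]
        exact (Finset.sum_congr rfl fun _ _ => Finset.sum_comm).trans Finset.sum_comm
    _ = _ := by
        simp_rw [fiber, card_eq_sum, Finset.mul_sum]
        exact Finset.sum_congr rfl fun _ _ => Finset.sum_congr rfl fun _ _ => by ring_nf

end Fibres

theorem Ideal.Quotient.isUnit_mk_iff_span_singleton_sup_eq_top {R : Type*} [CommRing R]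
    {I : Ideal R} {x : R} : IsUnit (Ideal.Quotient.mk I x) ↔ Ideal.span {x} ⊔ I = ⊤ := by
  rw [isUnit_iff_exists_inv, Ideal.eq_top_iff_one, Ideal.mem_span_singleton_sup]
  constructor
  · rintro ⟨y, hy⟩
    obtain ⟨a, rfl⟩ := Ideal.Quotient.mk_surjective y
    rw [← map_mul, ← map_one (Ideal.Quotient.mk I), Ideal.Quotient.eq] at hy
    exact ⟨a, 1 - x * a, by rw [← neg_sub]; exact I.neg_mem hy, by ring⟩
  · rintro ⟨a, b, hb, hab⟩
    refine ⟨Ideal.Quotient.mk I a, ?_⟩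
    rw [← map_mul, ← map_one (Ideal.Quotient.mk I), Ideal.Quotient.eq,
      show x * a - 1 = -b by rw [← hab]; ring]
    exact I.neg_mem hb

section UniqueFactorization

open UniqueFactorizationMonoid

variable {α : Type*} [CommMonoidWithZero α] [NormalizationMonoid α]
  [UniqueFactorizationMonoid α] [Subsingleton αˣ]

theorem primeFactors_prod_of_prime {S : Finset α} (hS : ∀ p ∈ S, Prime p) :
    primeFactors (∏ p ∈ S, p) = S := by
  classical
  rw [← toFinset_normalizedFactors, ← Finset.prod_map_val, Multiset.map_id',
    normalizedFactors_prod_of_prime hS, Finset.val_toFinset]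

theorem squarefree_prod_of_prime [Nontrivial α] {S : Finset α} (hS : ∀ p ∈ S, Prime p) :
    Squarefree (∏ p ∈ S, p) := by
  rw [← Finset.prod_map_val, Multiset.map_id', squarefree_iff_nodup_normalizedFactors
    (Multiset.prod_ne_zero_of_prime _ hS), normalizedFactors_prod_of_prime hS]
  exact S.nodup

theorem radical_eq_self_of_squarefree [Nontrivial α] {a : α} (ha : Squarefree a) : radical a = a :=
  associated_iff_eq.1 (radical_associated ha.isRadical ha.ne_zero)

end UniqueFactorization

section Moebius

open UniqueFactorizationMonoid

variable {K : Type*} [Field K] [NumberField K]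

theorem idealMoebius_of_squarefree {I : Ideal (𝓞 K)} (hI : Squarefree I) :
    idealMoebius K I = (-1) ^ (primeFactors I).card := by
  unfold idealMoebius
  split_ifs with htop
  · simp [htop, ← Ideal.one_eq_top]
  · rw [factors_eq_normalizedFactors]
    rfl

theorem idealMoebius_of_not_squarefree {I : Ideal (𝓞 K)} (hI : ¬ Squarefree I) :
    idealMoebius K I = 0 := by
  have htop : I ≠ ⊤ := by rintro rfl; exact hI (Ideal.one_eq_top (R := 𝓞 K) ▸ squarefree_one)
  simp [idealMoebius, htop, hI]

theorem finsum_idealMoebius_dvd {J : Ideal (𝓞 K)} (hJ : J ≠ ⊥) :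
    ∑ᶠ (𝔡 : Ideal (𝓞 K)) (_ : 𝔡 ∣ J), idealMoebius K 𝔡 = if J = ⊤ then 1 else 0 := by
  classical
  have hfin : {𝔡 | 𝔡 ∣ J}.Finite :=
    Set.finite_coe_iff.1 (@Finite.of_fintype _ (fintypeSubtypeDvd J hJ))
  have hP : ∀ S ∈ (primeFactors J).powerset, ∀ p ∈ S, Prime p := fun S hS p hp =>
    prime_of_normalized_factor p (mem_primeFactors.1 (Finset.mem_powerset.1 hS hp))
  have hJ0 : J ≠ 0 := hJ
  refine (finsum_mem_eq_finite_toFinset_sum _ hfin).trans ?_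
  calc ∑ 𝔡 ∈ hfin.toFinset, idealMoebius K 𝔡
      = ∑ 𝔡 ∈ (primeFactors J).powerset.image (fun S => ∏ p ∈ S, p), idealMoebius K 𝔡 := by
        refine (Finset.sum_subset ?_ ?_).symm
        · simp only [Finset.subset_iff, Finset.mem_image, Set.Finite.mem_toFinset,
            Set.mem_ofPred_eq]
          rintro _ ⟨S, hS, rfl⟩
          exact (Finset.prod_dvd_prod_of_subset _ _ _ (Finset.mem_powerset.1 hS)).trans
            radical_dvd_self
        · intro 𝔡 h𝔡J h𝔡
          by_contra hμ
          have hsq : Squarefree 𝔡 := by_contra fun h => hμ (idealMoebius_of_not_squarefree h)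
          refine h𝔡 (Finset.mem_image.2 ⟨primeFactors 𝔡, ?_, radical_eq_self_of_squarefree hsq⟩)
          exact Finset.mem_powerset.2 (radical_dvd_radical_iff_primeFactors_subset_primeFactors.1
            (radical_dvd_radical ((Set.Finite.mem_toFinset hfin).1 h𝔡J) hJ0))
    _ = ∑ S ∈ (primeFactors J).powerset, (-1) ^ S.card := by
        rw [Finset.sum_image fun S hS T hT h => by
          rw [← primeFactors_prod_of_prime (hP S hS), h, primeFactors_prod_of_prime (hP T hT)]]
        refine Finset.sum_congr rfl fun S hS => ?_
        rw [idealMoebius_of_squarefree (squarefree_prod_of_prime (hP S hS)),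
          primeFactors_prod_of_prime (hP S hS)]
    _ = if J = ⊤ then 1 else 0 := by
        simp_rw [Finset.sum_powerset_neg_one_pow_card, primeFactors_eq_empty_iff hJ0,
          Ideal.isUnit_iff]

open Classical in
theorem ite_isUnit_mk_eq_finsum_idealMoebius {𝔪 : Ideal (𝓞 K)} (h𝔪 : 𝔪 ≠ ⊥) (x : 𝓞 K) :
    (if IsUnit (Ideal.Quotient.mk 𝔪 x) then 1 else 0 : ℤ) =
      ∑ᶠ (𝔡 : Ideal (𝓞 K)) (_ : 𝔡 ∣ 𝔪), idealMoebius K 𝔡 * if x ∈ 𝔡 then 1 else 0 := by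
  have hdvd : ∀ 𝔡, 𝔡 ∣ Ideal.span {x} ⊔ 𝔪 ↔ 𝔡 ∣ 𝔪 ∧ x ∈ 𝔡 := fun 𝔡 => by
    simp only [Ideal.dvd_iff_le, sup_le_iff, Ideal.span_singleton_le_iff_mem, and_comm]
  have hne : Ideal.span {x} ⊔ 𝔪 ≠ ⊥ := fun h => h𝔪 (eq_bot_iff.2 (h ▸ le_sup_right))
  simp_rw [Ideal.Quotient.isUnit_mk_iff_span_singleton_sup_eq_top, ← finsum_idealMoebius_dvd hne,
    hdvd, mul_ite, mul_one, mul_zero, finsum_eq_if, ite_and]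

end Moebius

theorem Ideal.Quotient.forall_mk_eq_imp_iff {R : Type*} [CommRing R] {I J : Ideal R} (h : I ≤ J)
    (s : R ⧸ I) (P : R ⧸ J → Prop) :
    (∀ y, Ideal.Quotient.mk I y = s → P (Ideal.Quotient.mk J y)) ↔
      P (Ideal.Quotient.factor h s) := by
  obtain ⟨y, rfl⟩ := Ideal.Quotient.mk_surjective s
  refine ⟨fun H => by simpa using H y rfl, fun H y' hy' => ?_⟩
  rwa [← Ideal.Quotient.factor_mk h y', hy']

theorem phiPairIdeal_eq_natCard {K : Type*} [Field K] [NumberField K] (k : ℕ)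
    {𝔫 𝔡 : Ideal (𝓞 K)} (h : 𝔫 ≤ 𝔡) :
    phiPairIdeal K k 𝔫 𝔡 = Nat.card {v : Fin k → (𝓞 K ⧸ 𝔫)ˣ //
      IsUnit (Ideal.Quotient.factor h (∑ i, (v i : 𝓞 K ⧸ 𝔫)))} :=
  Nat.card_congr <| Equiv.subtypeEquivRight fun _ => Ideal.Quotient.forall_mk_eq_imp_iff h _ _

/-- Recursion: for `k ≥ 2` and `𝔪 ∣ 𝔫`,
`φ_k(𝔫, 𝔪) = φ(𝔫) · ∑_{𝔡 ∣ 𝔪} μ(𝔡)/φ(𝔡) · φ_{k−1}(𝔫, 𝔡)`. -/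
theorem phiPairIdeal_recursion (K : Type*) [Field K] [NumberField K]
    (k : ℕ) (hk : 2 ≤ k) (𝔫 𝔪 : Ideal (𝓞 K)) (h𝔫 : 𝔫 ≠ ⊥) (h𝔪 : 𝔪 ∣ 𝔫) :
    (phiPairIdeal K k 𝔫 𝔪 : ℚ) =
      (Nat.card ((𝓞 K ⧸ 𝔫)ˣ) : ℚ) *
        ∑ᶠ (𝔡 : Ideal (𝓞 K)) (_ : 𝔡 ∣ 𝔪),
          (idealMoebius K 𝔡 : ℚ) / (Nat.card ((𝓞 K ⧸ 𝔡)ˣ) : ℚ) *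
            (phiPairIdeal K (k - 1) 𝔫 𝔡 : ℚ) := by
  classical
  obtain ⟨m, rfl⟩ : ∃ m, k = m + 1 := ⟨k - 1, by omega⟩
  have h𝔪0 : 𝔪 ≠ ⊥ := by rintro rfl; exact h𝔫 (zero_dvd_iff.1 h𝔪)
  have : Finite (𝓞 K ⧸ 𝔫) := Ideal.finiteQuotientOfFreeOfNeBot 𝔫 h𝔫
  let := UniqueFactorizationMonoid.fintypeSubtypeDvd 𝔪 h𝔪0
  have hle (𝔡 : {𝔡 // 𝔡 ∣ 𝔪}) : 𝔫 ≤ 𝔡 := Ideal.le_of_dvd (𝔡.2.trans h𝔪)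
  have hsum {M : Type} [AddCommMonoid M] (g : Ideal (𝓞 K) → M) :
      ∑ᶠ (𝔡) (_ : 𝔡 ∣ 𝔪), g 𝔡 = ∑ 𝔡 : {𝔡 // 𝔡 ∣ 𝔪}, g 𝔡 := by
    rw [← finsum_subtype_eq_finsum_cond, finsum_eq_sum_of_fintype]
  rw [Nat.add_sub_cancel, phiPairIdeal_eq_natCard _ (Ideal.le_of_dvd h𝔪), hsum,
    card_unitTuples_succ (fun 𝔡 => Ideal.Quotient.factor (hle 𝔡))
      (fun _ => Ideal.Quotient.factor_surjective _)
      (fun a => IsUnit (Ideal.Quotient.factor (Ideal.le_of_dvd h𝔪) a))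
      (fun 𝔡 => idealMoebius K 𝔡) ?_ m]
  · simp_rw [phiPairIdeal_eq_natCard _ (hle _)]
  · intro a
    obtain ⟨x, rfl⟩ := Ideal.Quotient.mk_surjective a
    have := congrArg (Int.cast : ℤ → ℚ) (ite_isUnit_mk_eq_finsum_idealMoebius h𝔪0 x)
    push_cast [hsum] at this
    simp_rw [Ideal.Quotient.factor_mk, Ideal.Quotient.eq_zero_iff_mem]
    exact this
end

section
/- Let K be a number field with ring of integers O_K, 𝔫 a nonzero ideal, and 𝔪 an ideal dividing 𝔫. Define φ_k(𝔫, 𝔪) as the number of k-tuples (a₁,…,a_k) of units of O_K/𝔫 whose sum is a unit modulo 𝔪. Then φ_k(𝔫, 𝔪) = φ(𝔫)^k · ∏_{𝔭 | 𝔪} (1 − 1/(N(𝔭)−1) + ⋯ + (−1)^{k−1}/(N(𝔭)−1)^{k−1}), where the product runs over prime ideals dividing 𝔪. -/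
/-!
Reduction modulo the distinct prime factors `𝔭` of `𝔫` maps `(𝓞 K ⧸ 𝔫)ˣ` onto
`∏ 𝔭, (𝓞 K ⧸ 𝔭)ˣ` (Chinese remainder theorem), and an element of `𝓞 K ⧸ 𝔫` is a unit modulo `𝔪`
exactly when its residues modulo the primes `𝔭 ∣ 𝔪` are nonzero. All fibres of a surjective group
homomorphism have the same size, so the proportion of good `k`-tuples is the product over `𝔭 ∣ 𝔪`
of the proportion of `k`-tuples of units of the residue field with nonzero sum.

If `a k` counts the latter and `q = N(𝔭)`, then `a (k + 1) + a k = (q - 1) ^ (k + 1)`: a tuple with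
sum zero is a tuple of length `k` with nonzero sum preceded by minus that sum. Hence
`a k / (q - 1) ^ k = ∑ j < k, (-1 / (q - 1)) ^ j`.
-/

open NumberField

open Finset UniqueFactorizationMonoid

theorem Nat.card_subtype_add_card_subtype_not {α : Type*} [Finite α] (p : α → Prop) :
    Nat.card {a // p a} + Nat.card {a // ¬p a} = Nat.card α := by
  classical
  rw [← Nat.card_sum, Nat.card_congr (Equiv.sumCompl p)]

theorem card_subtype_forall_div_card {ι : Type*} [Fintype ι] {X : ι → Type*}
    (P : ∀ i, X i → Prop) :
    (Nat.card {x : ∀ i, X i // ∀ i, P i (x i)} : ℚ) / Nat.card (∀ i, X i) =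
      ∏ i, (Nat.card {x // P i x} : ℚ) / Nat.card (X i) := by
  rw [Nat.card_congr (Equiv.subtypePiEquivPi (p := P)), Nat.card_pi, Nat.card_pi]
  push_cast
  exact (prod_div_distrib ..).symm

theorem MonoidHom.card_subtype_comp {G H : Type*} [Group G] [Group H] {f : G →* H}
    (hf : Function.Surjective f) (P : H → Prop) :
    Nat.card {g // P (f g)} = Nat.card {h // P h} * Nat.card f.ker := by
  rw [← Nat.card_prod, ← Nat.card_congr (Equiv.sigmaSubtypeFiberEquivSubtype f fun _ => Iff.rfl)]
  exact Nat.card_congr ((Equiv.sigmaCongrRight fun h : Subtype P =>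
    f.fiberEquivKerOfSurjective hf h.1).trans (Equiv.sigmaEquivProd _ _))

theorem MonoidHom.card_subtype_comp_div_card {G H : Type*} [Group G] [Group H] [Finite G]
    {f : G →* H} (hf : Function.Surjective f) (P : H → Prop) :
    (Nat.card {g // P (f g)} : ℚ) / Nat.card G = Nat.card {h // P h} / Nat.card H := by
  have hG := f.card_subtype_comp hf fun _ => True
  simp only [Nat.card_congr (Equiv.subtypeUnivEquiv fun _ => trivial)] at hG
  rw [f.card_subtype_comp hf, hG, Nat.cast_mul, Nat.cast_mul,
    mul_div_mul_right _ _ (Nat.cast_ne_zero.mpr Nat.card_pos.ne')]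

theorem card_units_tuple_sum_eq_zero_succ (F : Type*) [Ring F] (k : ℕ) :
    Nat.card {w : Fin (k + 1) → Fˣ // ∑ i, (w i : F) = 0} =
      Nat.card {t : Fin k → Fˣ // IsUnit (∑ i, (t i : F))} :=
  Nat.card_congr
    { toFun := fun w => ⟨Fin.tail w.1, by
        have hw := w.2
        rw [Fin.sum_univ_succ, add_eq_zero_iff_eq_neg'] at hw
        simp [Fin.tail, hw]⟩
      invFun := fun t => ⟨Fin.cons t.2.neg.unit t.1, by simp [Fin.sum_univ_succ]⟩
      left_inv := fun w => by
        have hw := w.2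
        rw [Fin.sum_univ_succ] at hw
        refine Subtype.ext ?_
        conv_rhs => rw [← Fin.cons_self_tail w.1]
        exact congrArg (Fin.cons (α := fun _ => Fˣ) · (Fin.tail w.1))
          (Units.ext (eq_neg_of_add_eq_zero_left hw).symm)
      right_inv := fun t => by simp }

-- Stated for finite domains rather than fields: applied to `R ⧸ 𝔭`, a field version would have to
-- unify the units of `Ideal.Quotient.field` with those of the quotient ring, which is very slow.
theorem card_units_tuple_sum_ne_zero_div_card (F : Type*) [CommRing F] [IsDomain F] [Finite F]
    (k : ℕ) :
    (Nat.card {w : Fin k → Fˣ // ∑ i, (w i : F) ≠ 0} : ℚ) / Nat.card (Fin k → Fˣ) =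
      ∑ j ∈ range k, (-1 : ℚ) ^ j / (Nat.card Fˣ : ℚ) ^ j := by
  have hunit (x : F) : IsUnit x ↔ x ≠ 0 := by
    let := (Finite.isField_of_domain F).toField
    exact isUnit_iff_ne_zero
  have hu : (Nat.card Fˣ : ℚ) ≠ 0 := Nat.cast_ne_zero.mpr Nat.card_pos.ne'
  induction k with
  | zero => simp
  | succ k ih =>
    have hcompl := Nat.card_subtype_add_card_subtype_not
      fun w : Fin (k + 1) → Fˣ => ∑ i, (w i : F) ≠ 0
    simp only [not_not, card_units_tuple_sum_eq_zero_succ, hunit, Nat.card_fun, Nat.card_fin]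
      at hcompl
    have hsub : (Nat.card {w : Fin (k + 1) → Fˣ // ∑ i, (w i : F) ≠ 0} : ℚ) =
        (Nat.card Fˣ : ℚ) ^ (k + 1) - Nat.card {w : Fin k → Fˣ // ∑ i, (w i : F) ≠ 0} := by
      rw [eq_sub_iff_add_eq]
      exact_mod_cast hcompl
    have hterm : ∀ j ∈ range k, (-1 : ℚ) ^ (j + 1) / (Nat.card Fˣ : ℚ) ^ (j + 1) =
        -(Nat.card Fˣ : ℚ)⁻¹ * ((-1) ^ j / (Nat.card Fˣ : ℚ) ^ j) :=
      fun j _ => by ring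
    rw [sum_range_succ', sum_congr rfl hterm, ← mul_sum, ← ih, hsub]
    simp only [Nat.card_fun, Nat.card_fin, Nat.cast_pow]
    field_simp
    ring

theorem card_units_tuple_sum_ne_zero_on_div_card {ι : Type*} [Fintype ι] {F : ι → Type*}
    [∀ i, CommRing (F i)] [∀ i, IsDomain (F i)] [∀ i, Finite (F i)] (p : ι → Prop)
    [DecidablePred p] (k : ℕ) :
    (Nat.card {w : Fin k → ∀ i, (F i)ˣ // ∀ i, p i → ∑ l, (w l i : F i) ≠ 0} : ℚ) /
        Nat.card (Fin k → ∀ i, (F i)ˣ) =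
      ∏ i, if p i then ∑ j ∈ range k, (-1 : ℚ) ^ j / (Nat.card (F i)ˣ : ℚ) ^ j else 1 := by
  let e := Equiv.piComm fun (_ : Fin k) i => (F i)ˣ
  rw [Nat.card_congr (e.subtypeEquiv (p := fun w => ∀ i, p i → ∑ l, (w l i : F i) ≠ 0)
    (q := fun w => ∀ i, p i → ∑ l, (w i l : F i) ≠ 0) fun _ => Iff.rfl), Nat.card_congr e,
    card_subtype_forall_div_card fun i (t : Fin k → (F i)ˣ) => p i → ∑ l, (t l : F i) ≠ 0]
  refine prod_congr rfl fun i _ => ?_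
  split_ifs with hi
  · simp only [hi, forall_const]
    exact card_units_tuple_sum_ne_zero_div_card _ k
  · simp only [hi, IsEmpty.forall_iff]
    rw [Nat.card_congr (Equiv.subtypeUnivEquiv fun _ => trivial)]
    exact div_self (Nat.cast_ne_zero.mpr Nat.card_pos.ne')

theorem UniqueFactorizationMonoid.primeFactors_mono {M : Type*} [CommMonoidWithZero M]
    [NormalizationMonoid M] [UniqueFactorizationMonoid M] {a b : M} (hb : b ≠ 0) (h : a ∣ b) :
    primeFactors a ⊆ primeFactors b := fun p hp => by
  rw [mem_primeFactors] at hp ⊢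
  exact Multiset.subset_of_le
    ((dvd_iff_normalizedFactors_le_normalizedFactors (ne_zero_of_dvd_ne_zero hb h) hb).mp h) hp

theorem Ideal.Quotient.isUnit_mk_iff_forall_isMaximal {R : Type*} [CommRing R] {I : Ideal R}
    {x : R} : IsUnit (Ideal.Quotient.mk I x) ↔ ∀ M : Ideal R, M.IsMaximal → I ≤ M → x ∉ M := by
  constructor
  · intro hx M hM hIM hxM
    have := hx.map (Ideal.Quotient.factor hIM)
    rw [Ideal.Quotient.factor_mk, Ideal.Quotient.eq_zero_iff_mem.mpr hxM] at this
    exact not_isUnit_zero this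
  · intro h
    by_contra hx
    obtain ⟨M, hM, hxM⟩ := exists_max_ideal_of_mem_nonunits hx
    refine h (M.comap (Ideal.Quotient.mk I)) (Ideal.comap_isMaximal_of_surjective _
      Ideal.Quotient.mk_surjective) (fun y hy => ?_) hxM
    rw [Ideal.mem_comap, Ideal.Quotient.eq_zero_iff_mem.mpr hy]
    exact M.zero_mem

theorem Ideal.Quotient.forall_mk_eq_imp_isUnit_iff {R : Type*} [CommRing R] {I J : Ideal R}
    (h : I ≤ J) (x : R ⧸ I) :
    (∀ y : R, Ideal.Quotient.mk I y = x → IsUnit (Ideal.Quotient.mk J y)) ↔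
      IsUnit (Ideal.Quotient.factor h x) := by
  obtain ⟨y, rfl⟩ := Ideal.Quotient.mk_surjective x
  rw [Ideal.Quotient.factor_mk]
  refine ⟨fun H => H y rfl, fun H z hz => ?_⟩
  rwa [← Ideal.Quotient.factor_mk h, hz, Ideal.Quotient.factor_mk]

theorem Ideal.card_units_quotient {S : Type*} [CommRing S] [IsDedekindDomain S]
    [Module.Free ℤ S] [Module.Finite ℤ S] (𝔭 : Ideal S) [𝔭.IsMaximal] :
    Nat.card (S ⧸ 𝔭)ˣ = Ideal.absNorm 𝔭 - 1 := by
  let _ := Ideal.Quotient.field 𝔭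
  rw [Nat.card_units, Ideal.absNorm_apply, Submodule.cardQuot_apply]

section DedekindDomain

variable {R : Type*} [CommRing R] [IsDedekindDomain R] {𝔫 𝔪 𝔭 : Ideal R}

theorem Ideal.le_of_mem_primeFactors (h : 𝔭 ∈ primeFactors 𝔫) : 𝔫 ≤ 𝔭 :=
  Ideal.le_of_dvd (dvd_of_mem_normalizedFactors (mem_primeFactors.mp h))

theorem Ideal.mem_primeFactors_iff_isMaximal (h𝔫 : 𝔫 ≠ ⊥) :
    𝔭 ∈ primeFactors 𝔫 ↔ 𝔭.IsMaximal ∧ 𝔫 ≤ 𝔭 := by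
  rw [mem_primeFactors, Ideal.mem_normalizedFactors_iff h𝔫]
  exact ⟨fun ⟨hp, hle⟩ => ⟨hp.isMaximal fun h => h𝔫 (le_bot_iff.mp (h ▸ hle)), hle⟩,
    fun ⟨hm, hle⟩ => ⟨hm.isPrime, hle⟩⟩

theorem Ideal.finprod_isPrime_dvd_eq_prod_primeFactors {M : Type*} [CommMonoid M] (h𝔫 : 𝔫 ≠ ⊥)
    (f : Ideal R → M) :
    ∏ᶠ (𝔭 : Ideal R) (_ : 𝔭.IsPrime ∧ 𝔭 ∣ 𝔫), f 𝔭 = ∏ 𝔭 ∈ primeFactors 𝔫, f 𝔭 :=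
  finprod_cond_eq_prod_of_cond_iff f fun _ => by
    rw [mem_primeFactors, Ideal.mem_normalizedFactors_iff h𝔫, Ideal.dvd_iff_le]

theorem Ideal.Quotient.isUnit_mk_iff_forall_mem_primeFactors (h𝔫 : 𝔫 ≠ ⊥) {x : R} :
    IsUnit (Ideal.Quotient.mk 𝔫 x) ↔ ∀ 𝔭 ∈ primeFactors 𝔫, x ∉ 𝔭 := by
  simp only [Ideal.Quotient.isUnit_mk_iff_forall_isMaximal,
    Ideal.mem_primeFactors_iff_isMaximal h𝔫, and_imp]

theorem Ideal.Quotient.isUnit_factor_iff (h𝔫 : 𝔫 ≠ ⊥) (h : 𝔫 ≤ 𝔪) (x : R ⧸ 𝔫) :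
    IsUnit (Ideal.Quotient.factor h x) ↔ ∀ 𝔭 : primeFactors 𝔫, (𝔭 : Ideal R) ∈ primeFactors 𝔪 →
      Ideal.Quotient.factor (Ideal.le_of_mem_primeFactors 𝔭.2) x ≠ 0 := by
  obtain ⟨y, rfl⟩ := Ideal.Quotient.mk_surjective x
  simp only [Ideal.Quotient.factor_mk, ne_eq, Ideal.Quotient.eq_zero_iff_mem,
    Ideal.Quotient.isUnit_mk_iff_forall_mem_primeFactors (ne_bot_of_le_ne_bot h𝔫 h)]
  exact ⟨fun H 𝔭 => H 𝔭, fun H 𝔭 h𝔭 =>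
    H ⟨𝔭, primeFactors_mono h𝔫 (Ideal.dvd_iff_le.mpr h) h𝔭⟩ h𝔭⟩

variable (𝔫) in
def Ideal.unitsToPrimeFactors : (R ⧸ 𝔫)ˣ →* ∀ 𝔭 : primeFactors 𝔫, (R ⧸ (𝔭 : Ideal R))ˣ :=
  MonoidHom.pi fun 𝔭 =>
    Units.map (Ideal.Quotient.factor (Ideal.le_of_mem_primeFactors 𝔭.2)).toMonoidHom

theorem Ideal.coe_unitsToPrimeFactors_apply (x : (R ⧸ 𝔫)ˣ) (𝔭 : primeFactors 𝔫) :
    (𝔫.unitsToPrimeFactors x 𝔭 : R ⧸ (𝔭 : Ideal R)) =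
      Ideal.Quotient.factor (Ideal.le_of_mem_primeFactors 𝔭.2) x :=
  rfl

theorem Ideal.unitsToPrimeFactors_surjective (h𝔫 : 𝔫 ≠ ⊥) :
    Function.Surjective 𝔫.unitsToPrimeFactors := by
  intro w
  have hmax (𝔭 : primeFactors 𝔫) : (𝔭 : Ideal R).IsMaximal :=
    ((Ideal.mem_primeFactors_iff_isMaximal h𝔫).mp 𝔭.2).1
  have hcop : Pairwise fun 𝔭 𝔮 : primeFactors 𝔫 => IsCoprime (𝔭 : Ideal R) 𝔮 :=
    fun 𝔭 𝔮 hne => Ideal.isCoprime_iff_sup_eq.mpr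
      ((hmax 𝔭).coprime_of_ne (hmax 𝔮) (Subtype.coe_injective.ne hne))
  obtain ⟨r, hr⟩ := Ideal.pi_quotient_surjective hcop fun 𝔭 => (w 𝔭 : R ⧸ (𝔭 : Ideal R))
  have hunit : IsUnit (Ideal.Quotient.mk 𝔫 r) :=
    (Ideal.Quotient.isUnit_mk_iff_forall_mem_primeFactors h𝔫).mpr fun 𝔭 h𝔭 hr𝔭 => by
      have := hmax ⟨𝔭, h𝔭⟩
      refine (w ⟨𝔭, h𝔭⟩).ne_zero ?_
      rw [← hr ⟨𝔭, h𝔭⟩]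
      exact Ideal.Quotient.eq_zero_iff_mem.mpr hr𝔭
  exact ⟨hunit.unit, funext fun 𝔭 => Units.ext (hr 𝔭)⟩

theorem Ideal.card_units_tuple_isUnit_sum_div_card_pow (h𝔫 : 𝔫 ≠ ⊥) [Finite (R ⧸ 𝔫)] (h : 𝔫 ≤ 𝔪)
    (k : ℕ) :
    (Nat.card {v : Fin k → (R ⧸ 𝔫)ˣ // IsUnit (Ideal.Quotient.factor h (∑ i, (v i : R ⧸ 𝔫)))} :
        ℚ) / (Nat.card (R ⧸ 𝔫)ˣ : ℚ) ^ k =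
      ∏ 𝔭 ∈ primeFactors 𝔪, ∑ j ∈ range k, (-1 : ℚ) ^ j / (Nat.card (R ⧸ 𝔭)ˣ : ℚ) ^ j := by
  classical
  have hmax (𝔭 : primeFactors 𝔫) : (𝔭 : Ideal R).IsMaximal :=
    ((Ideal.mem_primeFactors_iff_isMaximal h𝔫).mp 𝔭.2).1
  have hfin (𝔭 : primeFactors 𝔫) : Finite (R ⧸ (𝔭 : Ideal R)) :=
    Finite.of_surjective _ (Ideal.Quotient.factor_surjective (Ideal.le_of_mem_primeFactors 𝔭.2))
  let f := 𝔫.unitsToPrimeFactors.compLeft (Fin k)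
  have hf : Function.Surjective f := (𝔫.unitsToPrimeFactors_surjective h𝔫).comp_left
  have htransport (v : Fin k → (R ⧸ 𝔫)ˣ) :
      IsUnit (Ideal.Quotient.factor h (∑ i, (v i : R ⧸ 𝔫))) ↔
        ∀ 𝔭 : primeFactors 𝔫, (𝔭 : Ideal R) ∈ primeFactors 𝔪 →
          ∑ i, (f v i 𝔭 : R ⧸ (𝔭 : Ideal R)) ≠ 0 := by
    rw [Ideal.Quotient.isUnit_factor_iff h𝔫 h]
    simp only [map_sum, f, MonoidHom.compLeft_apply, Function.comp_apply,
      Ideal.coe_unitsToPrimeFactors_apply]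
  calc _ = (Nat.card {w : Fin k → ∀ 𝔭 : primeFactors 𝔫, (R ⧸ (𝔭 : Ideal R))ˣ //
          ∀ 𝔭 : primeFactors 𝔫, (𝔭 : Ideal R) ∈ primeFactors 𝔪 →
            ∑ i, (w i 𝔭 : R ⧸ (𝔭 : Ideal R)) ≠ 0} : ℚ) /
          Nat.card (Fin k → ∀ 𝔭 : primeFactors 𝔫, (R ⧸ (𝔭 : Ideal R))ˣ) := by
        rw [Nat.card_congr (Equiv.subtypeEquivRight htransport),
          show (Nat.card (R ⧸ 𝔫)ˣ : ℚ) ^ k = Nat.card (Fin k → (R ⧸ 𝔫)ˣ) by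
            rw [Nat.card_fun, Nat.card_fin, Nat.cast_pow]]
        exact MonoidHom.card_subtype_comp_div_card hf fun w =>
          ∀ 𝔭 : primeFactors 𝔫, (𝔭 : Ideal R) ∈ primeFactors 𝔪 →
            ∑ i, (w i 𝔭 : R ⧸ (𝔭 : Ideal R)) ≠ 0
    _ = _ := by
        rw [card_units_tuple_sum_ne_zero_on_div_card,
          prod_coe_sort (primeFactors 𝔫) fun 𝔭 => if 𝔭 ∈ primeFactors 𝔪 then
            ∑ j ∈ range k, (-1 : ℚ) ^ j / (Nat.card (R ⧸ 𝔭)ˣ : ℚ) ^ j else 1,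
          prod_ite_mem, inter_eq_right.mpr (primeFactors_mono h𝔫 (Ideal.dvd_iff_le.mpr h))]

end DedekindDomain

theorem phiPairIdeal_formula_general (K : Type*) [Field K] [NumberField K]
    (k : ℕ) (𝔫 𝔪 : Ideal (𝓞 K)) (h𝔫 : 𝔫 ≠ ⊥) (h𝔪 : 𝔪 ∣ 𝔫) :
    (phiPairIdeal K k 𝔫 𝔪 : ℚ) =
      (Nat.card ((𝓞 K ⧸ 𝔫)ˣ) : ℚ) ^ k *
        ∏ᶠ (𝔭 : Ideal (𝓞 K)) (_ : 𝔭.IsPrime ∧ 𝔭 ∣ 𝔪),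
          ∑ j ∈ Finset.range k, (-1 : ℚ) ^ j / ((Ideal.absNorm 𝔭 : ℚ) - 1) ^ j := by
  have h := Ideal.le_of_dvd h𝔪
  have h𝔪0 : 𝔪 ≠ ⊥ := ne_bot_of_le_ne_bot h𝔫 h
  have := Ideal.finiteQuotientOfFreeOfNeBot 𝔫 h𝔫
  have hφ : (Nat.card (𝓞 K ⧸ 𝔫)ˣ : ℚ) ^ k ≠ 0 :=
    pow_ne_zero _ (Nat.cast_ne_zero.mpr Nat.card_pos.ne')
  have hnorm (𝔭 : Ideal (𝓞 K)) (h𝔭 : 𝔭 ∈ primeFactors 𝔪) :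
      (Nat.card (𝓞 K ⧸ 𝔭)ˣ : ℚ) = Ideal.absNorm 𝔭 - 1 := by
    have := ((Ideal.mem_primeFactors_iff_isMaximal h𝔪0).mp h𝔭).1
    rw [Ideal.card_units_quotient, Nat.cast_sub (Nat.one_le_iff_ne_zero.mpr
      ((Ideal.absNorm_ne_zero_iff 𝔭).mpr inferInstance)), Nat.cast_one]
  rw [phiPairIdeal, Nat.card_congr (Equiv.subtypeEquivRight fun v =>
      Ideal.Quotient.forall_mk_eq_imp_isUnit_iff h _),
    Ideal.finprod_isPrime_dvd_eq_prod_primeFactors h𝔪0,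
    ← prod_congr rfl fun 𝔭 h𝔭 =>
      congrArg (fun q : ℚ => ∑ j ∈ range k, (-1 : ℚ) ^ j / q ^ j) (hnorm 𝔭 h𝔭),
    ← Ideal.card_units_tuple_isUnit_sum_div_card_pow h𝔫 h k, mul_div_cancel₀ _ hφ]

/-- For `𝔪 ∣ 𝔫`,
`φ_k(𝔫, 𝔪) = φ(𝔫)^k · ∏_{𝔭 ∣ 𝔪} (1 − 1/(N(𝔭)−1) + ⋯ + (−1)^{k−1}/(N(𝔭)−1)^{k−1})`. -/
theorem phiPairIdeal_formula (K : Type*) [Field K] [NumberField K]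
    (k : ℕ) (hk : 1 ≤ k) (𝔫 𝔪 : Ideal (𝓞 K)) (h𝔫 : 𝔫 ≠ ⊥) (h𝔪 : 𝔪 ∣ 𝔫) :
    (phiPairIdeal K k 𝔫 𝔪 : ℚ) =
      (Nat.card ((𝓞 K ⧸ 𝔫)ˣ) : ℚ) ^ k *
        ∏ᶠ (𝔭 : Ideal (𝓞 K)) (_ : 𝔭.IsPrime ∧ 𝔭 ∣ 𝔪),
          ∑ j ∈ Finset.range k, (-1 : ℚ) ^ j / ((Ideal.absNorm 𝔭 : ℚ) - 1) ^ j :=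
  phiPairIdeal_formula_general K k 𝔫 𝔪 h𝔫 h𝔪
end

section
/- For a positive integer n, define φ₂(n) as the number of pairs (a₁, a₂) with 1 ≤ a₁, a₂ ≤ n, gcd(a₁a₂, n) = 1 and gcd(a₁+a₂, n) = 1. Then ∑ gcd(a₁+a₂−1, n) = φ₂(n)·σ₀(n), where the sum runs over all such pairs (a₁, a₂). -/
/-!
Reduced mod `n`, the pairs are the `(x, y) ∈ (ℤ/n)²` with `x y` and `x + y` units. Writing
`(x, y) = (s b, s (1 - b))` identifies them with the pairs of a unit `s = x + y` and an exceptional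
unit `b` (both `b` and `1 - b` units), and the summand depends on `s` only. Both sides therefore
carry the factor `#{exceptional units}`, and what remains is Menon's identity
`∑_{s ∈ (ℤ/n)ˣ} gcd(s - 1, n) = φ(n) σ₀(n)`. It follows from `gcd(m, n) = ∑_{d ∣ gcd(m, n)} φ(d)`:
for `d ∣ n`, the units `s ≡ 1 mod d` form the kernel of the surjection `(ℤ/n)ˣ → (ℤ/d)ˣ`, which
has `φ(n) / φ(d)` elements.
-/

/-- `φ₂(n)`: the number of pairs `(a₁, a₂)` with `1 ≤ a₁, a₂ ≤ n`,
`gcd(a₁a₂, n) = 1` and `gcd(a₁+a₂, n) = 1`. -/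
def phiTwo (n : ℕ) : ℕ :=
  (((Finset.Icc 1 n) ×ˢ (Finset.Icc 1 n)).filter
    (fun a => Nat.gcd (a.1 * a.2) n = 1 ∧ Nat.gcd (a.1 + a.2) n = 1)).card

open Finset

section ExceptionalUnits

variable (R : Type*) [CommRing R] [Fintype R] [DecidablePred (IsUnit : R → Prop)]

def exceptionalUnits : Finset R := univ.filter fun b => IsUnit b ∧ IsUnit (1 - b)

variable {R} [DecidableEq R] {M : Type*} [AddCommMonoid M]

theorem sum_filter_isUnit_mul_and_isUnit_add (g : R → M) :
    ∑ p ∈ univ.filter (fun p : R × R => IsUnit (p.1 * p.2) ∧ IsUnit (p.1 + p.2)), g (p.1 + p.2) =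
      #(exceptionalUnits R) • ∑ u : Rˣ, g u := by
  symm
  calc #(exceptionalUnits R) • ∑ u : Rˣ, g u
      = ∑ q ∈ (univ : Finset Rˣ) ×ˢ exceptionalUnits R, g q.1 := by
        simp only [sum_product, sum_const, smul_sum]
    _ = _ := by
      refine sum_nbij (fun q => (q.1 * q.2, q.1 * (1 - q.2))) ?_ ?_ ?_ ?_
      · rintro ⟨u, b⟩ hq
        simp only [exceptionalUnits, mem_product, mem_filter, mem_univ, true_and] at hq ⊢
        refine ⟨(u.isUnit.mul hq.1).mul (u.isUnit.mul hq.2), ?_⟩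
        rw [← mul_add, add_sub_cancel, mul_one]
        exact u.isUnit
      · rintro ⟨u, b⟩ - ⟨v, c⟩ - h
        simp only [Prod.mk.injEq] at h
        have huv : u = v := Units.ext <| by
          simpa only [← mul_add, add_sub_cancel, mul_one] using congrArg₂ (· + ·) h.1 h.2
        subst huv
        simpa using h.1
      · rintro ⟨x, y⟩ hp
        simp only [coe_filter, mem_univ, true_and, Set.mem_ofPred_eq, IsUnit.mul_iff] at hp
        obtain ⟨⟨hx, hy⟩, hs⟩ := hp
        set u := hs.unit
        have hu : (x + y) * ↑u⁻¹ = 1 := hs.mul_val_inv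
        have h1 : 1 - x * ↑u⁻¹ = y * ↑u⁻¹ := by linear_combination -hu
        refine ⟨(u, x * ↑u⁻¹), ?_, ?_⟩
        · simpa [exceptionalUnits, h1] using ⟨hx, hy⟩
        · simp only [h1, mul_left_comm (u : R), Units.mul_inv, mul_one]
      · rintro ⟨u, b⟩ -
        simp only [← mul_add, add_sub_cancel, mul_one]

end ExceptionalUnits

theorem Nat.sum_totient_filter_dvd {n : ℕ} (hn : n ≠ 0) (m : ℕ) :
    ∑ d ∈ n.divisors with d ∣ m, d.totient = m.gcd n := by
  have hdiv : {d ∈ n.divisors | d ∣ m} = {d ∈ n.divisors | d ∣ m.gcd n} :=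
    filter_congr fun d hd => by rw [Nat.dvd_gcd_iff, and_iff_left (Nat.dvd_of_mem_divisors hd)]
  rw [hdiv, Nat.divisors_filter_dvd_of_dvd hn (Nat.gcd_dvd_right m n), Nat.sum_totient]

namespace ZMod

theorem gcd_val_natCast (m n : ℕ) : (m : ZMod n).val.gcd n = m.gcd n := by
  rw [val_natCast, ← Nat.gcd_rec, Nat.gcd_comm]

section Menon

variable {n d : ℕ} [NeZero n] (h : d ∣ n)

theorem totient_mul_card_ker_unitsMap_s17 : d.totient * Nat.card (unitsMap h).ker = n.totient := by
  have : NeZero d := ⟨fun hd => NeZero.ne n (Nat.eq_zero_of_zero_dvd (hd ▸ h))⟩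
  have hrange : (unitsMap h).range = ⊤ := MonoidHom.range_eq_top.2 (unitsMap_surjective h)
  rw [← card_units_eq_totient, ← card_units_eq_totient, ← Nat.card_eq_fintype_card,
    ← Nat.card_eq_fintype_card, ← Subgroup.card_mul_index (unitsMap h).ker, Subgroup.index_ker,
    hrange, Subgroup.card_top, mul_comm]

theorem dvd_val_sub_one_iff (u : (ZMod n)ˣ) : d ∣ ((u : ZMod n) - 1).val ↔ unitsMap h u = 1 := by
  rw [← natCast_eq_zero_iff, natCast_val, ← castHom_apply (h := h), map_sub, map_one, sub_eq_zero,
    ← Units.val_eq_one, unitsMap_val, castHom_apply]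

theorem sum_units_gcd_val_sub_one :
    ∑ u : (ZMod n)ˣ, ((u : ZMod n) - 1).val.gcd n = n.totient * n.divisors.card := by
  calc ∑ u : (ZMod n)ˣ, ((u : ZMod n) - 1).val.gcd n
      = ∑ u : (ZMod n)ˣ, ∑ d ∈ n.divisors,
          if d ∣ ((u : ZMod n) - 1).val then d.totient else 0 := by
        simp only [← sum_filter, Nat.sum_totient_filter_dvd (NeZero.ne n)]
    _ = ∑ d ∈ n.divisors, ∑ u : (ZMod n)ˣ,
          if d ∣ ((u : ZMod n) - 1).val then d.totient else 0 := sum_comm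
    _ = ∑ d ∈ n.divisors, n.totient := sum_congr rfl fun d hd => by
        have h := Nat.dvd_of_mem_divisors hd
        simp only [dvd_val_sub_one_iff h, ← MonoidHom.mem_ker, sum_ite, sum_const_zero, add_zero,
          sum_const, smul_eq_mul]
        rw [← totient_mul_card_ker_unitsMap_s17 h, mul_comm, Nat.card_eq_fintype_card,
          ← Fintype.card_subtype]
    _ = n.totient * n.divisors.card := by rw [sum_const, smul_eq_mul, mul_comm]

end Menon

variable {M : Type*} [AddCommMonoid M] (n : ℕ) [NeZero n]

theorem sum_Icc_one_natCast (f : ZMod n → M) : ∑ a ∈ Icc 1 n, f a = ∑ x, f x := by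
  refine sum_nbij' (fun a => (a : ZMod n)) (fun x => (x - 1).val + 1) (by simp) ?_ ?_ (by simp)
    (fun _ _ => rfl)
  · intro x _
    simpa using val_lt (x - 1)
  · intro a ha
    obtain ⟨h1, h2⟩ := mem_Icc.1 ha
    have : (a : ZMod n) - 1 = ((a - 1 : ℕ) : ZMod n) := by rw [Nat.cast_sub h1, Nat.cast_one]
    simp only [this, val_cast_of_lt (show a - 1 < n by omega)]
    omega

theorem sum_filter_Icc_product_natCast (p : ZMod n × ZMod n → Prop) [DecidablePred p]
    (f : ZMod n × ZMod n → M) :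
    ∑ a ∈ (Icc 1 n ×ˢ Icc 1 n).filter (fun a => p (a.1, a.2)), f (a.1, a.2) =
      ∑ x ∈ univ.filter p, f x := by
  let g x y := if p (x, y) then f (x, y) else 0
  calc ∑ a ∈ (Icc 1 n ×ˢ Icc 1 n).filter (fun a => p (a.1, a.2)), f (a.1, a.2)
      = ∑ a ∈ Icc 1 n, ∑ b ∈ Icc 1 n, g a b := by rw [sum_filter, sum_product]
    _ = ∑ x, ∑ y, g x y := by
      simp only [sum_Icc_one_natCast n (g _), sum_Icc_one_natCast n (fun x => ∑ y, g x y)]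
    _ = ∑ x ∈ univ.filter p, f x := by rw [← Fintype.sum_prod_type', sum_filter]

theorem sum_filter_Icc_product_coprime [DecidablePred (IsUnit : ZMod n → Prop)]
    (f : ZMod n × ZMod n → M) :
    ∑ a ∈ (Icc 1 n ×ˢ Icc 1 n).filter (fun a => (a.1 * a.2).gcd n = 1 ∧ (a.1 + a.2).gcd n = 1),
        f (a.1, a.2) =
      ∑ p ∈ univ.filter (fun p : ZMod n × ZMod n => IsUnit (p.1 * p.2) ∧ IsUnit (p.1 + p.2)),
        f p := by
  rw [← sum_filter_Icc_product_natCast]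
  refine sum_congr (filter_congr fun a _ => ?_) fun _ _ => rfl
  simp only [← Nat.cast_mul, ← Nat.cast_add, isUnit_iff_coprime, Nat.coprime_iff_gcd_eq_one]

end ZMod

/-- **Sita Ramaiah's identity**: `∑ gcd(a₁+a₂−1, n) = φ₂(n)·σ₀(n)`, the sum
running over pairs `(a₁,a₂)` with `1 ≤ a₁,a₂ ≤ n`, `gcd(a₁a₂,n) = 1` and
`gcd(a₁+a₂,n) = 1`. -/
theorem sita_ramaiah_identity (n : ℕ) (hn : 0 < n) :
    ∑ a ∈ ((Finset.Icc 1 n) ×ˢ (Finset.Icc 1 n)).filter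
        (fun a => Nat.gcd (a.1 * a.2) n = 1 ∧ Nat.gcd (a.1 + a.2) n = 1),
      Nat.gcd (a.1 + a.2 - 1) n =
      phiTwo n * n.divisors.card := by
  have : NeZero n := ⟨hn.ne'⟩
  classical
  have hphiTwo : phiTwo n = #(exceptionalUnits (ZMod n)) * n.totient := by
    rw [phiTwo, card_eq_sum_ones, ZMod.sum_filter_Icc_product_coprime n fun _ => 1,
      sum_filter_isUnit_mul_and_isUnit_add fun _ : ZMod n => 1]
    simp [ZMod.card_units_eq_totient]
  calc _ = ∑ a ∈ ((Icc 1 n) ×ˢ (Icc 1 n)).filter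
          (fun a => Nat.gcd (a.1 * a.2) n = 1 ∧ Nat.gcd (a.1 + a.2) n = 1),
          (a.1 + a.2 - 1 : ZMod n).val.gcd n := sum_congr rfl fun a ha => by
        have h1 : 1 ≤ a.1 := (mem_Icc.1 (mem_product.1 (mem_filter.1 ha).1).1).1
        rw [← ZMod.gcd_val_natCast, Nat.cast_sub (by omega), Nat.cast_add, Nat.cast_one]
    _ = #(exceptionalUnits (ZMod n)) • ∑ u : (ZMod n)ˣ, ((u : ZMod n) - 1).val.gcd n := by
        rw [ZMod.sum_filter_Icc_product_coprime n fun p => (p.1 + p.2 - 1).val.gcd n,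
          sum_filter_isUnit_mul_and_isUnit_add fun s : ZMod n => (s - 1).val.gcd n]
    _ = phiTwo n * n.divisors.card := by
        rw [ZMod.sum_units_gcd_val_sub_one, smul_eq_mul, hphiTwo, mul_assoc]
end
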